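/- arXiv:2308.14993 — 10 statements merged into one kernel-verified Lean document; each statement's English description precedes it below -/
import Mathlib

section
/- Let p ∈ [0,1), let 1 ≤ k ≤ n be integers, let x ∈ {0,1}^n and w ∈ {0,1}^k. Then for every z ∈ ℂ: Σ_{ℓ=0}^{n−1} K_{w,x}[ℓ]·z^ℓ = Σ_{j=0}^{n−k} 1[x[j:j+k−1]=w]·(p+(1−p)z)^j. That is, the k-mer generating polynomial, whose coefficients are the k-mer density map entries, equals the subword-indicator polynomial evaluated at p+(1−p)z. -/
/-! Expand `(p + (1 - p) z) ^ j` binomially. Since `j ≤ n - k < n`, every term has degree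
below `n`, so exchanging the sum over `j` with the sum over degrees gives the coefficients
`K_{w,x}[ℓ]`. -/

open Finset

/-- Indicator (as a Prop) that the `k`-mer `w` occurs in `x` starting at position `j`,
i.e. `x_{j+t} = w_t` for all in-range `t`. -/
def occAt {n k : ℕ} (x : Fin n → Bool) (w : Fin k → Bool) (j : ℕ) : Prop :=
  ∀ t : Fin k, ∀ h : j + t.1 < n, x ⟨j + t.1, h⟩ = w t

open Classical in
/-- The real-valued indicator `1[x[j : j+k-1] = w]`. -/
noncomputable def indAt {n k : ℕ} (x : Fin n → Bool) (w : Fin k → Bool) (j : ℕ) : ℝ :=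
  if occAt x w j then 1 else 0

/-- The `k`-mer density map entry
`K_{w,x}[i] = ∑_{j=0}^{n-k} C(j,i) p^{j-i} (1-p)^i 1[x[j:j+k-1]=w]`. -/
noncomputable def Kmap (p : ℝ) {n k : ℕ} (x : Fin n → Bool) (w : Fin k → Bool) (i : ℕ) : ℝ :=
  ∑ j ∈ Finset.range (n - k + 1),
    (j.choose i : ℝ) * p ^ (j - i) * (1 - p) ^ i * indAt x w j

/-- The ℓ₁ distance between the `k`-mer density maps of `x` and `y`. -/
noncomputable def kmerL1 (p : ℝ) {n : ℕ} (k : ℕ) (x y : Fin n → Bool) : ℝ :=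
  ∑ w : Fin k → Bool, ∑ i ∈ Finset.range n, |Kmap p x w i - Kmap p y w i|

/-- The `k`-mer generating polynomial
`P_{w,x}(z) = ∑_{j=0}^{n-k} 1[x[j:j+k-1]=w] (p + (1-p) z)^j`. -/
noncomputable def Pgen (p : ℝ) {n k : ℕ} (x : Fin n → Bool) (w : Fin k → Bool) (z : ℂ) : ℂ :=
  ∑ j ∈ Finset.range (n - k + 1),
    (indAt x w j : ℝ) * ((p : ℂ) + (1 - (p : ℂ)) * z) ^ j

theorem add_mul_pow_eq_sum_range {R : Type*} [CommSemiring R] (a b z : R) {j N : ℕ}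
    (hj : j < N) :
    (a + b * z) ^ j = ∑ l ∈ range N, (j.choose l : R) * a ^ (j - l) * b ^ l * z ^ l := by
  rw [add_comm, add_pow]
  refine sum_subset (range_subset_range.2 hj) (fun l _ hl => ?_) |>.trans
    (sum_congr rfl fun l _ => by ring)
  rw [Nat.choose_eq_zero_of_lt (by simpa using hl), Nat.cast_zero, mul_zero]

theorem stmt_3_general (p : ℝ) (n k : ℕ) (hk : 1 ≤ k) (hkn : k ≤ n)
    (x : Fin n → Bool) (w : Fin k → Bool) (z : ℂ) :
    ∑ l ∈ Finset.range n, (Kmap p x w l : ℂ) * z ^ l = Pgen p x w z := by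
  unfold Kmap Pgen
  push_cast
  simp only [sum_mul]
  rw [sum_comm]
  refine sum_congr rfl fun j hj => ?_
  rw [add_mul_pow_eq_sum_range _ _ _ (N := n) (by have := mem_range.1 hj; omega), mul_sum]
  exact sum_congr rfl fun l _ => by ring

/-- The power series with coefficients `K_{w,x}[ℓ]` equals the subword-indicator
polynomial evaluated at `p + (1-p)z`. -/
theorem stmt_3 (p : ℝ) (hp0 : 0 ≤ p) (hp1 : p < 1) (n k : ℕ) (hk : 1 ≤ k) (hkn : k ≤ n)
    (x : Fin n → Bool) (w : Fin k → Bool) (z : ℂ) :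
    ∑ l ∈ Finset.range n, (Kmap p x w l : ℂ) * z ^ l = Pgen p x w z :=
  stmt_3_general p n k hk hkn x w z
end

section
/- Fix a deletion probability p ∈ [0,1). There exist a universal constant α > 0 and an integer L₀ such that: for every integer r with L := r³ ≥ L₀ and every integer k with 1 ≤ k ≤ r, there exist distinct strings x, y ∈ {0,1}^L, both satisfying x_i = y_i = 0 for all 0 ≤ i ≤ r−2 (i.e., both start with a run of 0s of length L^{1/3}−1), such that for every k-mer w ∈ {0,1}^k and every real θ with |θ| ≤ α·L^{−2/3}: |P_{w,x}(e^{iθ}) − P_{w,y}(e^{iθ})| ≤ 2^{−L^{1/3}/20}. -/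
open Finset
open scoped Nat

/-!
Let `x` and `y` carry their ones exactly at the positions `r + k i`, `i ∈ S` resp. `i ∈ S'`, for
subsets `S, S'` of `[0, r (r - 1))`. The ones are `k` apart, so every window of length `k` meets at
most one of them, and with `ζ = p + (1 - p) z` the polynomial `P_{w,x}(z)` is an affine function of
`H_S(ζ^k) = ∑_{i ∈ S} ζ^{k i}` whose slope has norm at most `k`. For `|θ| ≤ r⁻² / 100` the point
`u = ζ^k` lies in the unit disc within `1 / (100 r)` of `1`; expanding `u^i = (1 + (u - 1))^i` to
order `r` bounds `H_S(u) - H_{S'}(u)` by the differences of the binomial moments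
`∑_{i ∈ S} (i choose m)`, `m < r`, weighted by `ρ^m` with `ρ = 1 / (100 r)`, plus a tail of size
about `(e / 100)^r`. The weighted moments are at most `r² e^{r/100}`, and there are `2^{r (r-1)}`
sets `S` but only `2^{(r-2) r}` boxes for their weighted moment vectors, so by pigeonhole two sets
have all weighted moments within `O(r² e^{r/100} 2^{-r})` of each other.
-/

theorem sum_range_succ_choose_succ_mul_pow {R : Type*} [CommRing R] (x : R) (j d : ℕ) :
    ∑ m ∈ range (d + 1), ((j + 1).choose m : R) * x ^ m =
      (1 + x) * ∑ m ∈ range (d + 1), (j.choose m : R) * x ^ m - j.choose d * x ^ (d + 1) := by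
  induction d with
  | zero => simp
  | succ d ih =>
    rw [sum_range_succ, ih, sum_range_succ _ (d + 1), Nat.choose_succ_succ]
    push_cast
    ring

theorem norm_pow_sub_sum_choose_le {𝕜 : Type*} [NormedCommRing 𝕜] [NormOneClass 𝕜] {z : 𝕜}
    (hz : ‖z‖ ≤ 1) (j d : ℕ) :
    ‖z ^ j - ∑ m ∈ range d, (j.choose m : 𝕜) * (z - 1) ^ m‖ ≤ j.choose d * ‖z - 1‖ ^ d := by
  induction j generalizing d with
  | zero => cases d <;> simp [sum_range_succ']
  | succ j ih =>
    cases d with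
    | zero => simpa using norm_pow_le' z j.succ_pos |>.trans (pow_le_one₀ (norm_nonneg z) hz)
    | succ d =>
      have hrec : z ^ (j + 1) - ∑ m ∈ range (d + 1), ((j + 1).choose m : 𝕜) * (z - 1) ^ m =
          z * (z ^ j - ∑ m ∈ range (d + 1), (j.choose m : 𝕜) * (z - 1) ^ m) +
            j.choose d * (z - 1) ^ (d + 1) := by
        rw [sum_range_succ_choose_succ_mul_pow]; ring
      rw [hrec, Nat.choose_succ_succ', add_comm (j.choose d), Nat.cast_add, add_mul]
      refine (norm_add_le _ _).trans (add_le_add ?_ ?_)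
      · exact (norm_mul_le _ _).trans
          (by simpa using mul_le_mul hz (ih (d + 1)) (norm_nonneg _) zero_le_one)
      · refine (norm_mul_le _ _).trans
          (mul_le_mul ?_ (norm_pow_le _ _) (norm_nonneg _) (by positivity))
        simpa using Nat.norm_cast_le (α := 𝕜) (j.choose d)

def binomMoment (S : Finset ℕ) (m : ℕ) : ℕ := ∑ i ∈ S, i.choose m

section RCLike

variable {𝕜 : Type*} [RCLike 𝕜]

theorem norm_sum_pow_sub_sum_binomMoment_le (S : Finset ℕ) {u : 𝕜} (hu : ‖u‖ ≤ 1) (d : ℕ) :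
    ‖∑ i ∈ S, u ^ i - ∑ m ∈ range d, (binomMoment S m : 𝕜) * (u - 1) ^ m‖ ≤
      binomMoment S d * ‖u - 1‖ ^ d := by
  have hswap : ∑ m ∈ range d, (binomMoment S m : 𝕜) * (u - 1) ^ m =
      ∑ i ∈ S, ∑ m ∈ range d, (i.choose m : 𝕜) * (u - 1) ^ m := by
    simp only [binomMoment, Nat.cast_sum, sum_mul]
    exact sum_comm
  rw [hswap, ← sum_sub_distrib, binomMoment, Nat.cast_sum, sum_mul]
  exact (norm_sum_le _ _).trans (sum_le_sum fun i _ => norm_pow_sub_sum_choose_le hu i d)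

theorem norm_sum_pow_sub_sum_pow_le (S S' : Finset ℕ) {u : 𝕜} (hu : ‖u‖ ≤ 1) {ρ : ℝ}
    (hρ : ‖u - 1‖ ≤ ρ) (d : ℕ) :
    ‖∑ i ∈ S, u ^ i - ∑ i ∈ S', u ^ i‖ ≤
      ∑ m ∈ range d, |(binomMoment S m : ℝ) - binomMoment S' m| * ρ ^ m +
        (binomMoment S d + binomMoment S' d) * ρ ^ d := by
  set T := fun S : Finset ℕ => ∑ m ∈ range d, (binomMoment S m : 𝕜) * (u - 1) ^ m
  have hpow : ∀ m, ‖u - 1‖ ^ m ≤ ρ ^ m := fun m => pow_le_pow_left₀ (norm_nonneg _) hρ m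
  have hT : ‖T S - T S'‖ ≤ ∑ m ∈ range d, |(binomMoment S m : ℝ) - binomMoment S' m| * ρ ^ m := by
    rw [← sum_sub_distrib]
    refine (norm_sum_le _ _).trans (sum_le_sum fun m _ => ?_)
    have hcast : (binomMoment S m : 𝕜) - binomMoment S' m =
        (((binomMoment S m : ℝ) - binomMoment S' m : ℝ) : 𝕜) := by push_cast; rfl
    rw [← sub_mul, norm_mul, norm_pow, hcast, RCLike.norm_ofReal]
    exact mul_le_mul_of_nonneg_left (hpow m) (abs_nonneg _)
  calc ‖∑ i ∈ S, u ^ i - ∑ i ∈ S', u ^ i‖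
      = ‖(T S - T S') + (∑ i ∈ S, u ^ i - T S) - (∑ i ∈ S', u ^ i - T S')‖ := by ring_nf
    _ ≤ ‖T S - T S'‖ + ‖∑ i ∈ S, u ^ i - T S‖ + ‖∑ i ∈ S', u ^ i - T S'‖ :=
        norm_sub_le_of_le (norm_add_le _ _) le_rfl
    _ ≤ _ := by
      rw [add_mul, ← add_assoc]
      gcongr
      · exact (norm_sum_pow_sub_sum_binomMoment_le S hu d).trans (by gcongr)
      · exact (norm_sum_pow_sub_sum_binomMoment_le S' hu d).trans (by gcongr)

end RCLike

theorem binomMoment_mul_pow_le {N : ℕ} {S : Finset ℕ} (hS : S ⊆ range N) {ρ : ℝ} (hρ : 0 ≤ ρ)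
    (m : ℕ) : binomMoment S m * ρ ^ m ≤ N * ((N * ρ) ^ m / m !) := by
  have hchoose : ∀ i ∈ S, (i.choose m : ℝ) ≤ N ^ m / m ! := fun i hi =>
    (Nat.choose_le_pow_div m i).trans (by gcongr; exact (mem_range.mp (hS hi)).le)
  calc (binomMoment S m : ℝ) * ρ ^ m ≤ (#S * (N ^ m / m !)) * ρ ^ m := by
        gcongr
        push_cast [binomMoment]
        simpa using sum_le_sum hchoose
    _ ≤ N * (N ^ m / m !) * ρ ^ m := by
        gcongr
        simpa using card_le_card hS
    _ = N * ((N * ρ) ^ m / m !) := by ring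

theorem Finset.exists_ne_forall_abs_sub_lt_one {α : Type*} {d K : ℕ} (s : Finset α)
    (f : α → Fin d → ℝ) (hf : ∀ a ∈ s, ∀ m, 0 ≤ f a m ∧ f a m < K) (hcard : K ^ d < #s) :
    ∃ a ∈ s, ∃ b ∈ s, a ≠ b ∧ ∀ m, |f a m - f b m| < 1 := by
  obtain ⟨a, ha, b, hb, hab, heq⟩ := exists_ne_map_eq_of_card_lt_of_maps_to
    (t := Fintype.piFinset fun _ : Fin d => Ico (0 : ℤ) K) (f := fun a m => ⌊f a m⌋)
    (by simpa using hcard) fun a ha => Fintype.mem_piFinset.mpr fun m =>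
      mem_Ico.mpr ⟨Int.floor_nonneg.mpr (hf a ha m).1,
        Int.floor_lt.mpr (by exact_mod_cast (hf a ha m).2)⟩
  exact ⟨a, ha, b, hb, hab, fun m => Int.abs_sub_lt_one_of_floor_eq_floor (congrFun heq m)⟩

theorem exists_ne_binomMoment_close {N d E : ℕ} (h : E * d < N) {ρ : ℝ} (hρ : 0 ≤ ρ) :
    ∃ S ⊆ range N, ∃ S' ⊆ range N, S ≠ S' ∧ ∀ m < d,
      |(binomMoment S m : ℝ) - binomMoment S' m| * ρ ^ m < (N * Real.exp (N * ρ) + 1) / 2 ^ E := by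
  set B := (N : ℝ) * Real.exp (N * ρ) + 1
  have hB : 0 < B := by positivity
  have hbound : ∀ S ⊆ range N, ∀ m, binomMoment S m * ρ ^ m < B := fun S hS m =>
    (binomMoment_mul_pow_le hS hρ m).trans_lt (lt_add_of_le_of_pos
      (by gcongr; exact Real.pow_div_factorial_le_exp _ (by positivity) m) one_pos)
  obtain ⟨S, hS, S', hS', hne, hclose⟩ := (range N).powerset.exists_ne_forall_abs_sub_lt_one
    (K := 2 ^ E) (fun S (m : Fin d) => 2 ^ E / B * (binomMoment S m * ρ ^ m.1))
    (fun S hS m => by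
      refine ⟨by positivity, ?_⟩
      have := hbound S (mem_powerset.mp hS) m
      push_cast
      rw [div_mul_eq_mul_div, div_lt_iff₀ hB]
      gcongr)
    (by rw [card_powerset, card_range, ← pow_mul]; exact Nat.pow_lt_pow_right one_lt_two h)
  refine ⟨S, mem_powerset.mp hS, S', mem_powerset.mp hS', hne, fun m hm => ?_⟩
  have := hclose ⟨m, hm⟩
  rw [← mul_sub, abs_mul, abs_of_pos (by positivity), ← sub_mul, abs_mul,
    abs_of_nonneg (pow_nonneg hρ m)] at this
  rw [lt_div_iff₀ (by positivity)]
  rw [div_mul_eq_mul_div, div_lt_iff₀ hB] at this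
  linarith

theorem exists_ne_norm_sum_pow_sub_sum_pow_le (𝕜 : Type*) [RCLike 𝕜] {N d E : ℕ} (h : E * d < N)
    {ρ : ℝ} (hρ : 0 ≤ ρ) :
    ∃ S ⊆ range N, ∃ S' ⊆ range N, S ≠ S' ∧ ∀ u : 𝕜, ‖u‖ ≤ 1 → ‖u - 1‖ ≤ ρ →
      ‖∑ i ∈ S, u ^ i - ∑ i ∈ S', u ^ i‖ ≤
        d * ((N * Real.exp (N * ρ) + 1) / 2 ^ E) + 2 * (N * ((N * ρ) ^ d / d !)) := by
  obtain ⟨S, hS, S', hS', hne, hclose⟩ := exists_ne_binomMoment_close h hρ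
  refine ⟨S, hS, S', hS', hne, fun u hu hρu => (norm_sum_pow_sub_sum_pow_le S S' hu hρu d).trans ?_⟩
  refine add_le_add ?_ ?_
  · simpa using sum_le_card_nsmul _ _ _ fun m hm => (hclose m (mem_range.mp hm)).le
  · rw [add_mul, two_mul]
    exact add_le_add (binomMoment_mul_pow_le hS hρ d) (binomMoment_mul_pow_le hS' hρ d)

def IsSpike (r k : ℕ) (S : Finset ℕ) (v : ℕ) : Prop := ∃ i ∈ S, v = r + k * i

instance (r k : ℕ) (S : Finset ℕ) : DecidablePred (IsSpike r k S) := fun _ => by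
  unfold IsSpike; infer_instance

def spikeString (n r k : ℕ) (S : Finset ℕ) : Fin n → Bool := fun v => decide (IsSpike r k S v)

section Spikes

variable {n r k : ℕ} {S : Finset ℕ}

theorem IsSpike.eq_of_add {j a a' : ℕ} (h : IsSpike r k S (j + a)) (h' : IsSpike r k S (j + a'))
    (ha : a < k) (ha' : a' < k) : a = a' := by
  obtain ⟨i, -, hi⟩ := h
  obtain ⟨i', -, hi'⟩ := h'
  have : i = i' := by
    rcases Nat.lt_trichotomy i i' with hlt | heq | hgt
    · nlinarith [Nat.mul_le_mul_left k (Nat.succ_le_of_lt hlt)]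
    · exact heq
    · nlinarith [Nat.mul_le_mul_left k (Nat.succ_le_of_lt hgt)]
  subst this
  omega

theorem spikeString_injective (hk : 0 < k) {S' : Finset ℕ} (hS : ∀ i ∈ S ∪ S', r + k * i < n)
    (h : spikeString n r k S = spikeString n r k S') : S = S' := by
  have key : ∀ i ∈ S ∪ S', (i ∈ S ↔ i ∈ S') := fun i hi => by
    have := congrFun h ⟨r + k * i, hS i hi⟩
    have inj : ∀ T : Finset ℕ, IsSpike r k T (r + k * i) ↔ i ∈ T := fun T =>
      ⟨fun ⟨i', hi', he⟩ => by rwa [Nat.eq_of_mul_eq_mul_left hk (by omega : k * i = k * i')],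
        fun hi => ⟨i, hi, rfl⟩⟩
    simpa only [spikeString, decide_eq_decide, inj] using this
  ext i
  by_cases hi : i ∈ S ∪ S'
  · exact key i hi
  · simp_all

theorem occAt_spikeString_iff {w : Fin k → Bool} {j : ℕ} (hj : j + k ≤ n) :
    occAt (spikeString n r k S) w j ↔ ∀ t : Fin k, w t = decide (IsSpike r k S (j + t)) :=
  ⟨fun h t => (h t (by omega)).symm, fun h t _ => (h t).symm⟩

/-- A window at `j` of a spike string is either all zero or the unit vector at the unique offset
`a` with `IsSpike r k S (j + a)`; a spike at offset `a` turns an occurrence of the zero `k`-mer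
into one of the unit vector at `a`, whence the coefficients `+1` and `-1`. -/
def spikeCoeff (w : Fin k → Bool) (a : ℕ) : ℂ :=
  if ∀ t : Fin k, w t = decide (t.1 = a) then 1 else if ∀ t, w t = false then -1 else 0

theorem indAt_spikeString {w : Fin k → Bool} {j : ℕ} (hj : j + k ≤ n) :
    (indAt (spikeString n r k S) w j : ℂ) = (if ∀ t, w t = false then 1 else 0) +
      ∑ a ∈ range k, spikeCoeff w a * if IsSpike r k S (j + a) then 1 else 0 := by
  rw [indAt, occAt_spikeString_iff hj]
  by_cases h : ∃ a < k, IsSpike r k S (j + a)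
  · obtain ⟨a₀, ha₀, hspike⟩ := h
    have hiff : ∀ a < k, IsSpike r k S (j + a) ↔ a = a₀ := fun a ha =>
      ⟨fun h => h.eq_of_add hspike ha ha₀, fun h => h ▸ hspike⟩
    rw [sum_eq_single_of_mem a₀ (mem_range.mpr ha₀) fun a ha hne => by
      rw [if_neg ((hiff a (mem_range.mp ha)).not.mpr hne), mul_zero], if_pos hspike, mul_one]
    have hexcl : (∀ t : Fin k, w t = decide (t.1 = a₀)) → ¬ ∀ t, w t = false := fun h h0 => by
      simpa using (h ⟨a₀, ha₀⟩).symm.trans (h0 ⟨a₀, ha₀⟩)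
    simp only [fun t : Fin k => hiff t t.2, spikeCoeff]
    by_cases hδ : ∀ t : Fin k, w t = decide (t.1 = a₀)
    · rw [if_pos hδ, if_pos hδ, if_neg (hexcl hδ)]; simp
    · rw [if_neg hδ, if_neg hδ]
      split_ifs <;> simp
  · push Not at h
    have hnot : ∀ t : Fin k, ¬ IsSpike r k S (j + t) := fun t => h t t.2
    rw [sum_eq_zero fun a ha => by rw [if_neg (h a (mem_range.mp ha)), mul_zero]]
    simp only [hnot, decide_false]
    split_ifs <;> simp

theorem sum_range_ite_isSpike_pow {R : Type*} [CommSemiring R] (hk : 0 < k) (hkr : k ≤ r)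
    (hS : ∀ i ∈ S, r + k * i + k ≤ n) {a : ℕ} (ha : a < k) (ζ : R) :
    ∑ j ∈ range (n - k + 1), (if IsSpike r k S (j + a) then ζ ^ j else 0) =
      ζ ^ (r - a) * ∑ i ∈ S, (ζ ^ k) ^ i := by
  have hfilter : (range (n - k + 1)).filter (fun j => IsSpike r k S (j + a)) =
      S.image fun i => r - a + k * i := by
    ext j
    simp only [mem_filter, mem_range, mem_image]
    constructor
    · rintro ⟨-, i, hi, he⟩
      exact ⟨i, hi, by omega⟩
    · rintro ⟨i, hi, rfl⟩
      exact ⟨by have := hS i hi; omega, i, hi, by omega⟩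
  rw [← sum_filter, hfilter, sum_image fun i _ i' _ h => Nat.eq_of_mul_eq_mul_left hk (by omega),
    mul_sum]
  exact sum_congr rfl fun i _ => by rw [← pow_mul, ← pow_add]

theorem Pgen_spikeString (hk : 0 < k) (hkr : k ≤ r) (hkn : k ≤ n) (hS : ∀ i ∈ S, r + k * i + k ≤ n)
    (p : ℝ) (w : Fin k → Bool) (z : ℂ) :
    Pgen p (spikeString n r k S) w z =
      (if ∀ t, w t = false then ∑ j ∈ range (n - k + 1), ((p : ℂ) + (1 - p) * z) ^ j else 0) +
        (∑ a ∈ range k, spikeCoeff w a * ((p : ℂ) + (1 - p) * z) ^ (r - a)) *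
          ∑ i ∈ S, (((p : ℂ) + (1 - p) * z) ^ k) ^ i := by
  set ζ := (p : ℂ) + (1 - p) * z
  have hind : ∀ j ∈ range (n - k + 1), (indAt (spikeString n r k S) w j : ℂ) * ζ ^ j =
      ((if ∀ t, w t = false then 1 else 0) +
        ∑ a ∈ range k, spikeCoeff w a * if IsSpike r k S (j + a) then 1 else 0) * ζ ^ j :=
    fun j hj => by rw [indAt_spikeString (by have := mem_range.mp hj; omega)]
  rw [Pgen, sum_congr rfl hind]
  simp only [add_mul, sum_add_distrib, sum_mul, ite_mul, one_mul, zero_mul, mul_assoc]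
  congr 1
  · split_ifs <;> simp
  · rw [sum_comm]
    exact sum_congr rfl fun a ha => by
      rw [← mul_sum, sum_range_ite_isSpike_pow hk hkr hS (mem_range.mp ha)]

theorem norm_spikeCoeff_le (w : Fin k → Bool) (a : ℕ) : ‖spikeCoeff w a‖ ≤ 1 := by
  unfold spikeCoeff
  split_ifs <;> simp

theorem norm_Pgen_spikeString_sub_le (hk : 0 < k) (hkr : k ≤ r) (hkn : k ≤ n) {S' : Finset ℕ}
    (hS : ∀ i ∈ S, r + k * i + k ≤ n) (hS' : ∀ i ∈ S', r + k * i + k ≤ n) (p : ℝ)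
    (w : Fin k → Bool) {z : ℂ} (hζ : ‖(p : ℂ) + (1 - p) * z‖ ≤ 1) :
    ‖Pgen p (spikeString n r k S) w z - Pgen p (spikeString n r k S') w z‖ ≤
      k * ‖∑ i ∈ S, (((p : ℂ) + (1 - p) * z) ^ k) ^ i -
        ∑ i ∈ S', (((p : ℂ) + (1 - p) * z) ^ k) ^ i‖ := by
  rw [Pgen_spikeString hk hkr hkn hS, Pgen_spikeString hk hkr hkn hS', add_sub_add_left_eq_sub,
    ← mul_sub, norm_mul]
  gcongr
  calc ‖∑ a ∈ range k, spikeCoeff w a * ((p : ℂ) + (1 - p) * z) ^ (r - a)‖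
      ≤ ∑ a ∈ range k, (1 : ℝ) := (norm_sum_le _ _).trans <| sum_le_sum fun a _ => by
        rw [norm_mul, norm_pow]
        exact mul_le_one₀ (norm_spikeCoeff_le w a) (by positivity) (pow_le_one₀ (norm_nonneg _) hζ)
    _ = k := by simp

theorem add_mul_add_le_pow_three {i : ℕ} (hkr : k ≤ r) (hi : i < r * (r - 1)) :
    r + k * i + k ≤ r ^ 3 := by
  obtain _ | m := r
  · simp at hi
  have : k * (i + 1) ≤ (m + 1) * ((m + 1) * m) :=
    Nat.mul_le_mul hkr (by rw [Nat.add_sub_cancel] at hi; exact hi)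
  nlinarith

end Spikes

section Numerics

open Real

theorem norm_add_one_sub_mul_exp_le {p : ℝ} (hp0 : 0 ≤ p) (hp1 : p ≤ 1) (θ : ℝ) (k : ℕ) :
    ‖(p : ℂ) + (1 - p) * Complex.exp (θ * Complex.I)‖ ≤ 1 ∧
      ‖((p : ℂ) + (1 - p) * Complex.exp (θ * Complex.I)) ^ k - 1‖ ≤ k * |θ| := by
  have hz : ‖Complex.exp (θ * Complex.I)‖ = 1 := Complex.norm_exp_ofReal_mul_I θ
  have hz1 : ‖Complex.exp (θ * Complex.I) - 1‖ ≤ |θ| := by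
    simpa [mul_comm] using Real.norm_exp_I_mul_ofReal_sub_one_le (x := θ)
  set z := Complex.exp (θ * Complex.I)
  have hq : ‖(1 - p : ℂ)‖ = 1 - p := by
    rw [← Complex.ofReal_one, ← Complex.ofReal_sub, Complex.norm_real,
      Real.norm_of_nonneg (by linarith)]
  have hζ : ‖(p : ℂ) + (1 - p) * z‖ ≤ 1 :=
    calc ‖(p : ℂ) + (1 - p) * z‖ ≤ p + (1 - p) := by
          refine (norm_add_le _ _).trans (add_le_add (by simp [abs_of_nonneg hp0]) ?_)
          rw [norm_mul, hq, hz, mul_one]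
      _ = 1 := by ring
  refine ⟨hζ, ?_⟩
  calc ‖((p : ℂ) + (1 - p) * z) ^ k - 1‖ ≤ k * ‖(p : ℂ) + (1 - p) * z - 1‖ := by
        simpa using norm_pow_sub_sum_choose_le hζ k 1
    _ = k * ((1 - p) * ‖z - 1‖) := by
        rw [show (p : ℂ) + (1 - p) * z - 1 = (1 - p) * (z - 1) by ring, norm_mul, hq]
    _ ≤ k * |θ| := by gcongr; nlinarith [norm_nonneg (z - 1)]

theorem exp_div_two_le_two_pow (r : ℕ) : exp (r / 2) ≤ 2 ^ r := by
  calc exp (r / 2) ≤ exp (r * log 2) :=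
        exp_le_exp.mpr (by nlinarith [log_two_gt_d9, (r.cast_nonneg : (0 : ℝ) ≤ r)])
    _ = 2 ^ r := by rw [exp_nat_mul, exp_log two_pos]

theorem pow_div_hundred_div_factorial_le (r : ℕ) : ((r : ℝ) / 100) ^ r / r ! ≤ exp (-(r / 2)) := by
  have h8 : exp (r / 2) ^ 3 ≤ (100 : ℝ) ^ r := by
    calc exp (r / 2) ^ 3 ≤ ((2 : ℝ) ^ r) ^ 3 := by gcongr; exact exp_div_two_le_two_pow r
      _ = (8 : ℝ) ^ r := by rw [← pow_mul, mul_comm, pow_mul]; norm_num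
      _ ≤ 100 ^ r := by gcongr; norm_num
  calc ((r : ℝ) / 100) ^ r / r ! = ((r : ℝ) ^ r / r !) / 100 ^ r := by rw [div_pow]; ring
    _ ≤ exp r / exp (r / 2) ^ 3 := by gcongr; exact pow_div_factorial_le_exp _ (by positivity) r
    _ = exp (-(r / 2)) := by rw [← exp_nat_mul, ← exp_sub]; ring_nf

theorem ten_mul_pow_four_le_exp {x : ℝ} (hx : 10 ^ 6 ≤ x) : 10 * x ^ 4 ≤ exp (2 * x / 5) := by
  have h := pow_div_factorial_le_exp (2 * x / 5) (by positivity) 5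
  norm_num [Nat.factorial] at h
  nlinarith [pow_pos (by linarith : (0 : ℝ) < x) 4]

theorem exp_neg_le_two_rpow_neg {x : ℝ} (hx : 0 ≤ x) : exp (-x) ≤ (2 : ℝ) ^ (-x) := by
  rw [rpow_def_of_pos two_pos]
  exact exp_le_exp.mpr (by nlinarith [log_two_lt_d9])

theorem spike_error_le_two_rpow {r : ℕ} (hr : 10 ^ 6 ≤ r) {N : ℝ} (hN0 : 0 ≤ N) (hN : N ≤ r ^ 2) :
    r * (r * ((N * exp (N * (1 / (100 * r))) + 1) / 2 ^ (r - 2)) +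
        2 * (N * ((N * (1 / (100 * r))) ^ r / r !))) ≤ 2 ^ (-(r : ℝ) / 20) := by
  have hR : (10 : ℝ) ^ 6 ≤ r := by exact_mod_cast hr
  set R : ℝ := (r : ℝ)
  have hNρ : N * (1 / (100 * R)) ≤ R / 100 := by
    rw [mul_one_div, div_le_div_iff₀ (by positivity) (by norm_num)]; nlinarith
  have h2pow : exp (R / 2) / 4 ≤ 2 ^ (r - 2) := by
    rw [div_le_iff₀ (by norm_num), show (4 : ℝ) = 2 ^ 2 by norm_num, ← pow_add,
      Nat.sub_add_cancel (by omega : 2 ≤ r)]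
    exact exp_div_two_le_two_pow r
  have hmain : 10 * R ^ 4 * exp (R / 100) ≤ exp (-(R / 20)) * exp (R / 2) := by
    calc 10 * R ^ 4 * exp (R / 100) ≤ exp (2 * R / 5) * exp (R / 100) := by
          gcongr; exact ten_mul_pow_four_le_exp hR
      _ ≤ exp (-(R / 20)) * exp (R / 2) := by
          rw [← exp_add, ← exp_add]; exact exp_le_exp.mpr (by linarith)
  have h1 : (1 : ℝ) ≤ exp (R / 100) := one_le_exp (by positivity)
  calc R * (R * ((N * exp (N * (1 / (100 * R))) + 1) / 2 ^ (r - 2)) +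
        2 * (N * ((N * (1 / (100 * R))) ^ r / r !)))
      ≤ R * (R * ((R ^ 2 * exp (R / 100) + 1) / (exp (R / 2) / 4)) +
        2 * (R ^ 2 * ((R / 100) ^ r / r !))) := by gcongr
    _ ≤ R * (R * ((R ^ 2 * exp (R / 100) + 1) / (exp (R / 2) / 4)) +
        2 * (R ^ 2 * exp (-(R / 2)))) := by gcongr; exact pow_div_hundred_div_factorial_le r
    _ ≤ 10 * R ^ 4 * exp (R / 100) / exp (R / 2) := by
        have hE := exp_pos (R / 2)
        rw [exp_neg, show R * (R * ((R ^ 2 * exp (R / 100) + 1) / (exp (R / 2) / 4)) +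
            2 * (R ^ 2 * (exp (R / 2))⁻¹)) =
            (4 * R ^ 2 * (R ^ 2 * exp (R / 100) + 1) + 2 * R ^ 3) / exp (R / 2) by
          field_simp]
        have hR4 : R ^ 4 ≤ R ^ 4 * exp (R / 100) := le_mul_of_one_le_right (by positivity) h1
        have hR2 : R ^ 2 ≤ R ^ 4 := pow_le_pow_right₀ (by linarith) (by norm_num)
        have hR3 : R ^ 3 ≤ R ^ 4 := pow_le_pow_right₀ (by linarith) (by norm_num)
        gcongr
        linarith
    _ ≤ exp (-(R / 20)) := by
        rw [div_le_iff₀ (exp_pos _)]; exact hmain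
    _ ≤ 2 ^ (-R / 20) := by rw [neg_div]; exact exp_neg_le_two_rpow_neg (by positivity)
end Numerics

theorem spikeString_apply_of_lt {n r k : ℕ} {S : Finset ℕ} {v : Fin n} (hv : v.1 < r) :
    spikeString n r k S v = false :=
  decide_eq_false fun ⟨_, _, h⟩ => by omega

theorem exists_spikeString_ne_norm_Pgen_sub_le {r k : ℕ} (hr : 10 ^ 6 ≤ r) (hk : 0 < k)
    (hkr : k ≤ r) :
    ∃ S S' : Finset ℕ, spikeString (r ^ 3) r k S ≠ spikeString (r ^ 3) r k S' ∧
      ∀ (p : ℝ) (w : Fin k → Bool) (z : ℂ), ‖(p : ℂ) + (1 - p) * z‖ ≤ 1 →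
        ‖((p : ℂ) + (1 - p) * z) ^ k - 1‖ ≤ 1 / (100 * r) →
          ‖Pgen p (spikeString (r ^ 3) r k S) w z - Pgen p (spikeString (r ^ 3) r k S') w z‖ ≤
            2 ^ (-(r : ℝ) / 20) := by
  obtain ⟨S, hS, S', hS', hne, hclose⟩ := exists_ne_norm_sum_pow_sub_sum_pow_le ℂ
    (N := r * (r - 1)) (d := r) (E := r - 2) (ρ := 1 / (100 * r))
    (Nat.mul_lt_mul_of_pos_right (by omega) (by omega) |>.trans_eq (mul_comm _ _)) (by positivity)
  have hSn : ∀ T ⊆ range (r * (r - 1)), ∀ i ∈ T, r + k * i + k ≤ r ^ 3 :=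
    fun T hT i hi => add_mul_add_le_pow_three hkr (mem_range.mp (hT hi))
  refine ⟨S, S', fun h => hne (spikeString_injective hk (fun i hi => ?_) h),
    fun p w z hζ hζk => ?_⟩
  · rcases mem_union.mp hi with hi | hi
    · have := hSn S hS i hi; omega
    · have := hSn S' hS' i hi; omega
  calc _ ≤ k * ‖∑ i ∈ S, (((p : ℂ) + (1 - p) * z) ^ k) ^ i -
          ∑ i ∈ S', (((p : ℂ) + (1 - p) * z) ^ k) ^ i‖ :=
        norm_Pgen_spikeString_sub_le hk hkr (hkr.trans (Nat.le_self_pow (by norm_num) r))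
          (hSn S hS) (hSn S' hS') p w hζ
    _ ≤ r * (r * (((r * (r - 1) : ℕ) * Real.exp ((r * (r - 1) : ℕ) * (1 / (100 * r))) + 1) /
          2 ^ (r - 2)) +
          2 * ((r * (r - 1) : ℕ) * (((r * (r - 1) : ℕ) * (1 / (100 * r))) ^ r / r !))) := by
        gcongr
        exact hclose _ (by rw [norm_pow]; exact pow_le_one₀ (norm_nonneg _) hζ) hζk
    _ ≤ 2 ^ (-(r : ℝ) / 20) := spike_error_le_two_rpow hr (by positivity)
          (by rw [sq]; exact_mod_cast Nat.mul_le_mul_left r (Nat.sub_le r 1))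

/-- There is a universal constant `α > 0` such that for every deletion probability
`p ∈ [0,1)` there is `L₀` with: for every `r` with `L := r³ ≥ L₀` and every `1 ≤ k ≤ r`, there
exist distinct `x, y ∈ {0,1}^L` both starting with a run of `0`s of length `L^{1/3} - 1 = r - 1`,
such that for every `k`-mer `w` and every real `θ` with `|θ| ≤ α L^{-2/3}` we have
`|P_{w,x}(e^{iθ}) - P_{w,y}(e^{iθ})| ≤ 2^{-L^{1/3}/20}`. -/
theorem stmt_5 :
    ∃ α : ℝ, 0 < α ∧ ∀ p : ℝ, 0 ≤ p → p < 1 →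
      ∃ L₀ : ℕ, ∀ r : ℕ, L₀ ≤ r ^ 3 →
        ∀ k : ℕ, 1 ≤ k → k ≤ r →
          ∃ x y : Fin (r ^ 3) → Bool, x ≠ y ∧
            (∀ i : Fin (r ^ 3), i.1 + 2 ≤ r → x i = false ∧ y i = false) ∧
            ∀ w : Fin k → Bool, ∀ θ : ℝ, |θ| ≤ α * ((r : ℝ) ^ 3) ^ (-(2 : ℝ)/3) →
              ‖Pgen p x w (Complex.exp (θ * Complex.I)) -
                  Pgen p y w (Complex.exp (θ * Complex.I))‖ ≤
                (2 : ℝ) ^ (-(((r : ℝ) ^ 3) ^ ((1 : ℝ)/3)) / 20) := by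
  refine ⟨1 / 100, by norm_num, fun p hp0 hp1 => ⟨(10 ^ 6) ^ 3, fun r hr3 k hk hkr => ?_⟩⟩
  have hr : 10 ^ 6 ≤ r := (Nat.pow_le_pow_iff_left (by norm_num)).mp hr3
  have hR : (0 : ℝ) < r := by exact_mod_cast (by omega : 0 < r)
  obtain ⟨S, S', hne, hclose⟩ := exists_spikeString_ne_norm_Pgen_sub_le hr hk hkr
  refine ⟨_, _, hne, fun i hi => ⟨spikeString_apply_of_lt (by omega),
    spikeString_apply_of_lt (by omega)⟩, fun w θ hθ => ?_⟩
  have hθ' : |θ| ≤ 1 / (100 * r ^ 2) := by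
    rw [← Real.rpow_natCast, ← Real.rpow_mul hR.le] at hθ
    exact hθ.trans_eq (by norm_num; field_simp)
  obtain ⟨hζ, hζk⟩ := norm_add_one_sub_mul_exp_le hp0 hp1.le θ k
  rw [← Real.rpow_natCast, ← Real.rpow_mul hR.le, show ((3 : ℕ) : ℝ) * (1 / 3) = 1 by norm_num,
    Real.rpow_one]
  refine hclose p w _ hζ (hζk.trans ?_)
  calc (k : ℝ) * |θ| ≤ r * (1 / (100 * r ^ 2)) := by gcongr
    _ = 1 / (100 * r) := by field_simp
end

section
/- Let p ∈ [0,1), let r ≥ 1, M ≥ 1 be integers with L = rM, and let 1 ≤ k ≤ r. Let x ∈ S and let 1 ≤ j < k. Then for all z ∈ ℂ: P_{e_j,x}(z) = (p+(1−p)z)·P_{e_{j+1},x}(z). -/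
open Finset

/-- Membership in the set `S ⊆ {0,1}^L`: `x_i = 0` whenever `r ∤ (i+1)`, and `x_{L-1} = 0`.
These are exactly the strings `s₀b₁s₀b₂…s₀b_{M-1}s₀0` with `s₀ = 0^{r-1}`. -/
def memS (r : ℕ) {L : ℕ} (x : Fin L → Bool) : Prop :=
  (∀ i : Fin L, ¬ r ∣ (i.1 + 1) → x i = false) ∧
  (∀ h : 0 < L, x ⟨L - 1, Nat.sub_lt h Nat.one_pos⟩ = false)

/-- `e_j ∈ {0,1}^k` (for `1 ≤ j ≤ k`): the string with a single `1` at (0-based) index `j - 1`. -/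
def evec (k j : ℕ) : Fin k → Bool := fun t => decide (t.1 + 1 = j)

/-! In a string of `S` every `1` sits at a position `m` with `r ∣ m + 1` and `m ≠ L - 1`, so two
`1`s are at least `r` apart. An occurrence of `e_j` at `i + 1` and one of `e_{j+1}` at `i` both
put their single `1` at `i + j`, and the two windows differ only at `i` and `i + k`, which lie
closer than `r` to `i + j` and hence hold `0` anyway. So the indicator of `e_j` at `i + 1` is that
of `e_{j+1}` at `i`; the boundary terms (`e_j` at `0`, `e_{j+1}` at `L - k`) vanish, and the two
polynomials differ by one shift of the summation index, i.e. a factor `p + (1 - p) z`. -/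

theorem Nat.eq_of_dvd_add_one_of_dvd_add_one {r a b : ℕ} (ha : r ∣ a + 1) (hb : r ∣ b + 1)
    (hab : a < b + r) (hba : b < a + r) : a = b := by
  have hmod : a + 1 ≡ b + 1 [MOD r] :=
    (Nat.modEq_zero_iff_dvd.mpr ha).trans (Nat.modEq_zero_iff_dvd.mpr hb).symm
  refine (Nat.ModEq.add_right_cancel' 1 hmod).eq_of_abs_lt ?_
  rw [abs_sub_lt_iff]
  omega

theorem Finset.sum_range_succ_mul_pow_eq_mul {R : Type*} [CommSemiring R] (a b : ℕ → R) (q : R)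
    (N : ℕ) (ha : a 0 = 0) (hb : b N = 0) (hab : ∀ i < N, a (i + 1) = b i) :
    ∑ i ∈ range (N + 1), a i * q ^ i = q * ∑ i ∈ range (N + 1), b i * q ^ i := by
  rw [sum_range_succ', sum_range_succ, ha, hb, zero_mul, add_zero, zero_mul, add_zero, mul_sum]
  refine sum_congr rfl fun i hi => ?_
  rw [hab i (mem_range.mp hi), pow_succ]
  ring

theorem occAt_evec_iff {n k : ℕ} (x : Fin n → Bool) (j i : ℕ) :
    occAt x (evec k j) i ↔ ∀ m : Fin n, i ≤ m.1 → m.1 < i + k → (x m = true ↔ m.1 + 1 = i + j) := by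
  constructor
  · intro h m him hmk
    have hx := h ⟨m.1 - i, by omega⟩ (by dsimp only; omega)
    rw [show (⟨i + (m.1 - i), _⟩ : Fin n) = m from Fin.ext (by simp; omega)] at hx
    simp only [hx, evec, decide_eq_true_eq]
    omega
  · intro h t ht
    have hx := h ⟨i + t.1, ht⟩ (by simp) (by simp)
    simp only [evec]
    by_cases hj : t.1 + 1 = j
    · simpa [hj] using hx.mpr (by simp; omega)
    · simpa [hj] using (not_congr hx).mpr (by simp; omega)

theorem occAt_evec_succ_iff {n r k j i : ℕ} {x : Fin n → Bool}
    (hx : ∀ m : Fin n, x m = true → r ∣ m.1 + 1) (hj : 1 ≤ j) (hjk : j < k) (hkr : k ≤ r)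
    (hik : i + k < n) :
    occAt x (evec k j) (i + 1) ↔ occAt x (evec k (j + 1)) i := by
  rw [occAt_evec_iff, occAt_evec_iff]
  have hc : i + j < n := by omega
  have eq_of_near (hone : x ⟨i + j, hc⟩ = true) (m : Fin n) (hm : x m = true)
      (h₁ : m.1 < i + j + r) (h₂ : i + j < m.1 + r) : m.1 = i + j :=
    Nat.eq_of_dvd_add_one_of_dvd_add_one (hx m hm) (hx _ hone) h₁ h₂
  constructor
  · intro h m him hmk
    have hone := (h ⟨i + j, hc⟩ (by dsimp only; omega) (by dsimp only; omega)).mpr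
      (by dsimp only; omega)
    rcases him.eq_or_lt with rfl | him
    · refine ⟨fun hm => ?_, by omega⟩
      have := eq_of_near hone _ hm (by omega) (by omega)
      omega
    · rw [h m (by omega) (by omega)]
      omega
  · intro h m him hmk
    have hone := (h ⟨i + j, hc⟩ (by dsimp only; omega) (by dsimp only; omega)).mpr
      (by dsimp only; omega)
    rcases (show m.1 = i + k ∨ m.1 < i + k by omega) with hmk | hmk
    · refine ⟨fun hm => ?_, by omega⟩
      have := eq_of_near hone _ hm (by omega) (by omega)
      omega
    · rw [h m (by omega) (by omega)]
      omega

theorem not_occAt_evec_zero {n r k j : ℕ} {x : Fin n → Bool}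
    (hx : ∀ m : Fin n, x m = true → r ∣ m.1 + 1) (hj : 1 ≤ j) (hjr : j < r) (hjk : j ≤ k)
    (hjn : j ≤ n) : ¬ occAt x (evec k j) 0 := by
  rw [occAt_evec_iff]
  intro h
  have hone := (h ⟨j - 1, by omega⟩ (Nat.zero_le _) (by simp; omega)).mpr (by simp; omega)
  have := Nat.le_of_dvd (by omega) (hx _ hone)
  dsimp only at this
  omega

theorem not_occAt_evec_succ_last {n r k j : ℕ} {x : Fin n → Bool}
    (hx : ∀ m : Fin n, x m = true → r ∣ m.1 + 1 ∧ m.1 + 1 < n) (hrn : r ∣ n) (hjk : j < k)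
    (hkr : k ≤ r) (hkn : k ≤ n) : ¬ occAt x (evec k (j + 1)) (n - k) := by
  rw [occAt_evec_iff]
  intro h
  let m : Fin n := ⟨n - k + j, by omega⟩
  have hone : x m = true := (h m (by simp [m]) (by simp [m]; omega)).mpr (by simp [m]; omega)
  obtain ⟨hdvd, hlt⟩ := hx m hone
  have := Nat.eq_of_dvd_add_one_of_dvd_add_one (b := n - 1) hdvd
    (by rwa [Nat.sub_add_cancel (by omega)]) (by simp [m]; omega) (by simp [m]; omega)
  omega

theorem indAt_eq_zero {n k : ℕ} {x : Fin n → Bool} {w : Fin k → Bool} {j : ℕ}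
    (h : ¬ occAt x w j) : indAt x w j = 0 := by
  rw [indAt, if_neg h]

theorem indAt_congr {n k : ℕ} {x : Fin n → Bool} {w w' : Fin k → Bool} {i i' : ℕ}
    (h : occAt x w i ↔ occAt x w' i') : indAt x w i = indAt x w' i' := by
  rw [indAt, indAt, propext h]

theorem memS.dvd_and_lt_of_eq_true {r L : ℕ} {x : Fin L → Bool} (hx : memS r x) (m : Fin L)
    (hm : x m = true) : r ∣ m.1 + 1 ∧ m.1 + 1 < L := by
  refine ⟨by_contra fun h => by simp [hx.1 m h] at hm, ?_⟩
  by_contra h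
  have hlast := hx.2 (by omega)
  rw [show (⟨L - 1, _⟩ : Fin L) = m from Fin.ext (by simp; omega), hm] at hlast
  simp at hlast

theorem stmt_7_general (p : ℝ) (r M k : ℕ)
    (hM : 1 ≤ M) (hkr : k ≤ r)
    (x : Fin (r * M) → Bool) (hx : memS r x)
    (j : ℕ) (hj1 : 1 ≤ j) (hjk : j < k) (z : ℂ) :
    Pgen p x (evec k j) z = ((p : ℂ) + (1 - (p : ℂ)) * z) * Pgen p x (evec k (j + 1)) z := by
  have hkn : k ≤ r * M := hkr.trans (Nat.le_mul_of_pos_right r hM)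
  have hones := hx.dvd_and_lt_of_eq_true
  refine Finset.sum_range_succ_mul_pow_eq_mul _ _ _ _ ?_ ?_ fun i hi => ?_
  · rw [indAt_eq_zero (not_occAt_evec_zero (fun m hm => (hones m hm).1) hj1 (by omega) hjk.le
      (by omega)), Complex.ofReal_zero]
  · rw [indAt_eq_zero (not_occAt_evec_succ_last hones (dvd_mul_right r M) hjk hkr hkn),
      Complex.ofReal_zero]
  · rw [indAt_congr (occAt_evec_succ_iff (fun m hm => (hones m hm).1) hj1 hjk hkr (by omega))]

/-- For `x ∈ S` and `1 ≤ j < k`, `P_{e_j,x}(z) = (p + (1-p)z) · P_{e_{j+1},x}(z)`. -/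
theorem stmt_7 (p : ℝ) (hp0 : 0 ≤ p) (hp1 : p < 1) (r M k : ℕ)
    (hr : 1 ≤ r) (hM : 1 ≤ M) (hk1 : 1 ≤ k) (hkr : k ≤ r)
    (x : Fin (r * M) → Bool) (hx : memS r x)
    (j : ℕ) (hj1 : 1 ≤ j) (hjk : j < k) (z : ℂ) :
    Pgen p x (evec k j) z = ((p : ℂ) + (1 - (p : ℂ)) * z) * Pgen p x (evec k (j + 1)) z :=
  stmt_7_general p r M k hM hkr x hx j hj1 hjk z
end

section
/- Let p ∈ [0,1), let r ≥ 1, M ≥ 1 be integers with L = rM, and let 1 ≤ k ≤ r. Let x, y ∈ S and let z ∈ ℂ with |z| ≤ 1. Then |P_{0^k,x}(z) − P_{0^k,y}(z)| ≤ k·|P_{e_k,x}(z) − P_{e_k,y}(z)|. -/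
/-!
For `x ∈ S` any two ones are at least `r ≥ k` apart and lie in `[r-1, L-r-1]`, so a window of
length `k` contains at most one `1`. Hence `1[x[j:j+k-1] = 0^k] = 1 - ∑_{t<k} x_{j+t}` and
`1[x[j:j+k-1] = e_k] = x_{j+k-1}`. Summing against `q^j`, `q = p + (1-p)z`, and shifting indices
gives `P_{0^k,x} = ∑_{j ≤ L-k} q^j - (1 + q + ⋯ + q^{k-1}) P_{e_k,x}`. The first term does not
depend on `x` and `|q| ≤ 1`, so `|1 + q + ⋯ + q^{k-1}| ≤ k` gives the bound.
-/

open Finset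

def bitAt {n : ℕ} (x : Fin n → Bool) (m : ℕ) : Bool :=
  if h : m < n then x ⟨m, h⟩ else false

def OnesSeparated (k : ℕ) {n : ℕ} (x : Fin n → Bool) : Prop :=
  ∀ a b, bitAt x a → bitAt x b → a < b → a + k ≤ b

section Window

variable {n k : ℕ} {x : Fin n → Bool}

lemma occAt_iff_bitAt {w : Fin k → Bool} {j : ℕ} (hj : j + k ≤ n) :
    occAt x w j ↔ ∀ t : Fin k, bitAt x (j + t) = w t := by
  refine ⟨fun h t => ?_, fun h t ht => ?_⟩
  · have ht : j + t < n := by omega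
    simp [bitAt, ht, h t ht]
  · simpa [bitAt, ht] using h t

lemma OnesSeparated.eq_of_bitAt_add (hx : OnesSeparated k x) {j s t : ℕ}
    (hs : s < k) (ht : t < k) (hxs : bitAt x (j + s)) (hxt : bitAt x (j + t)) : s = t := by
  rcases lt_trichotomy s t with h | h | h
  · have := hx _ _ hxs hxt (by omega); omega
  · exact h
  · have := hx _ _ hxt hxs (by omega); omega

lemma OnesSeparated.indAt_zeros (hx : OnesSeparated k x) {j : ℕ} (hj : j + k ≤ n) :
    indAt x (fun _ : Fin k => false) j = 1 - ∑ t ∈ range k, if bitAt x (j + t) then 1 else 0 := by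
  rw [sum_boole, indAt]
  set W := {t ∈ range k | bitAt x (j + t)}
  have hW : #W ≤ 1 := card_le_one.2 fun s hs t ht => by
    simp only [W, mem_filter, mem_range] at hs ht
    exact hx.eq_of_bitAt_add hs.1 ht.1 hs.2 ht.2
  have hocc : occAt x (fun _ : Fin k => false) j ↔ W = ∅ := by
    rw [occAt_iff_bitAt hj, filter_eq_empty_iff]
    exact ⟨fun h t ht => by simpa using h ⟨t, mem_range.1 ht⟩,
      fun h t => by simpa using h (mem_range.2 t.2)⟩
  split_ifs with h
  · simp [hocc.1 h]
  · have : #W = 1 := by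
      have := card_pos.2 (nonempty_iff_ne_empty.2 (hocc.not.1 h))
      omega
    rw [this]
    norm_num

lemma OnesSeparated.indAt_evec (hx : OnesSeparated k x) (hk : 1 ≤ k) {j : ℕ} (hj : j + k ≤ n) :
    indAt x (evec k k) j = if bitAt x (j + (k - 1)) then 1 else 0 := by
  suffices occAt x (evec k k) j ↔ bitAt x (j + (k - 1)) by simp only [indAt, this]
  rw [occAt_iff_bitAt hj]
  refine ⟨fun h => by simpa [evec, Nat.sub_add_cancel hk] using h ⟨k - 1, by omega⟩, fun h t => ?_⟩
  by_cases ht : t.1 + 1 = k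
  · have : t.1 = k - 1 := by omega
    rw [this, h]
    simp [evec, ht]
  · have hne : t.1 ≠ k - 1 := by omega
    simpa [evec, ht] using fun hxt => hne (hx.eq_of_bitAt_add t.2 (by omega) hxt h)

end Window

lemma sum_range_eq_sum_range_add {M : Type*} [AddCommMonoid M] {g : ℕ → M} {d N : ℕ}
    (hg : ∀ i, g i ≠ 0 → d ≤ i ∧ i < N) :
    ∑ i ∈ range N, g i = ∑ i ∈ range N, g (i + d) := by
  have hzero (s : Finset ℕ) (i : ℕ) (_ : i ∈ s) (hi : i ∉ Ico d N) : g i = 0 := by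
    by_contra h
    exact hi (mem_Ico.2 (hg i h))
  calc ∑ i ∈ range N, g i = ∑ i ∈ Ico d N, g i :=
        (sum_subset (fun i hi => by simp at hi ⊢; omega) (hzero _)).symm
    _ = ∑ i ∈ Ico d (N + d), g i :=
        sum_subset (fun i hi => by simp at hi ⊢; omega) (hzero _)
    _ = ∑ i ∈ range N, g (i + d) := by
        rw [sum_Ico_eq_sum_range, Nat.add_sub_cancel]
        simp only [add_comm d]

section MemS

variable {r L : ℕ} {x : Fin L → Bool}

lemma memS.dvd_of_bitAt (hx : memS r x) {m : ℕ} (hm : bitAt x m) : r ∣ m + 1 := by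
  unfold bitAt at hm
  split_ifs at hm with h
  by_contra hr
  simp [hx.1 ⟨m, h⟩ hr] at hm

lemma memS.onesSeparated (hx : memS r x) {k : ℕ} (hkr : k ≤ r) : OnesSeparated k x :=
  fun a b ha hb hab => by
    have := Nat.le_of_dvd (by omega) (Nat.dvd_sub (hx.dvd_of_bitAt hb) (hx.dvd_of_bitAt ha))
    omega

lemma memS.add_le_of_bitAt (hx : memS r x) (hrL : r ∣ L) {m : ℕ} (hm : bitAt x m) :
    r ≤ m + 1 ∧ m + 1 + r ≤ L := by
  have hdvd := hx.dvd_of_bitAt hm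
  unfold bitAt at hm
  split_ifs at hm with hmL
  have hne : m ≠ L - 1 := fun he => by
    have := hx.2 (by omega)
    simp_all
  have := Nat.le_of_dvd (by omega) (Nat.dvd_sub hrL hdvd)
  exact ⟨Nat.le_of_dvd (by omega) hdvd, by omega⟩

end MemS

lemma Pgen_zeros_eq (p : ℝ) {L k : ℕ} {x : Fin L → Bool} (hk : 1 ≤ k) (hkL : k ≤ L)
    (hsep : OnesSeparated k x) (hrange : ∀ m, bitAt x m → k - 1 ≤ m ∧ m + k ≤ L) (z : ℂ) :
    Pgen p x (fun _ : Fin k => false) z =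
      ∑ j ∈ range (L - k + 1), ((p : ℂ) + (1 - p) * z) ^ j
        - (∑ u ∈ range k, ((p : ℂ) + (1 - p) * z) ^ u) * Pgen p x (evec k k) z := by
  unfold Pgen
  generalize (p : ℂ) + (1 - p) * z = q
  set N := L - k + 1
  set b : ℕ → ℂ := fun m => ((if bitAt x m then 1 else 0 : ℝ) : ℂ)
  -- The ones lie in `[k-1, L-k]`, so shifting the window start by `k-1-t` loses no terms.
  have hshift : ∀ t < k, ∑ j ∈ range N, b (j + t) * q ^ j
      = q ^ (k - 1 - t) * ∑ j ∈ range N, b (j + (k - 1)) * q ^ j := fun t ht => by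
    refine (sum_range_eq_sum_range_add (d := k - 1 - t) fun i hi => ?_).trans ?_
    · have hb : bitAt x (i + t) := by
        by_contra h
        simp [b, h] at hi
      have := hrange _ hb
      omega
    · rw [mul_sum]
      refine sum_congr rfl fun j _ => ?_
      rw [show j + (k - 1 - t) + t = j + (k - 1) by omega, pow_add]
      ring
  calc ∑ j ∈ range N, ((indAt x (fun _ : Fin k => false) j : ℝ) : ℂ) * q ^ j
      = ∑ j ∈ range N, (1 - ∑ t ∈ range k, b (j + t)) * q ^ j := sum_congr rfl fun j hj => by
        rw [hsep.indAt_zeros (by simp [N] at hj; omega)]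
        push_cast
        rfl
    _ = ∑ j ∈ range N, q ^ j - ∑ t ∈ range k, ∑ j ∈ range N, b (j + t) * q ^ j := by
        simp only [sub_mul, one_mul, sum_mul, sum_sub_distrib]
        rw [sum_comm]
    _ = ∑ j ∈ range N, q ^ j - (∑ u ∈ range k, q ^ u) * ∑ j ∈ range N, b (j + (k - 1)) * q ^ j := by
        rw [sum_congr rfl fun t ht => hshift t (mem_range.1 ht), ← sum_mul,
          sum_range_reflect (q ^ ·) k]
    _ = _ := by
        congr 2
        refine sum_congr rfl fun j hj => ?_
        rw [hsep.indAt_evec hk (by simp [N] at hj; omega)]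

lemma norm_geom_sum_le {R : Type*} [NormedDivisionRing R] {q : R} (hq : ‖q‖ ≤ 1) (k : ℕ) :
    ‖∑ u ∈ range k, q ^ u‖ ≤ k :=
  calc ‖∑ u ∈ range k, q ^ u‖ ≤ ∑ u ∈ range k, ‖q‖ ^ u :=
        norm_sum_le_of_le _ fun u _ => (norm_pow q u).le
    _ ≤ ∑ _u ∈ range k, 1 := sum_le_sum fun u _ => pow_le_one₀ (norm_nonneg q) hq
    _ = k := by simp

lemma norm_ofReal_add_one_sub_mul_le_one {p : ℝ} (hp0 : 0 ≤ p) (hp1 : p ≤ 1) {z : ℂ}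
    (hz : ‖z‖ ≤ 1) : ‖(p : ℂ) + (1 - p) * z‖ ≤ 1 :=
  calc ‖(p : ℂ) + (1 - p) * z‖ ≤ ‖(p : ℂ)‖ + ‖((1 - p : ℝ) : ℂ)‖ * ‖z‖ := by
        rw [← norm_mul]
        push_cast
        exact norm_add_le _ _
    _ = p + (1 - p) * ‖z‖ := by
        rw [Complex.norm_of_nonneg hp0, Complex.norm_of_nonneg (by linarith)]
    _ ≤ 1 := by nlinarith

theorem stmt_8_general (p : ℝ) (hp0 : 0 ≤ p) (hp1 : p < 1) (r M k : ℕ)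
    (hM : 1 ≤ M) (hk1 : 1 ≤ k) (hkr : k ≤ r)
    (x y : Fin (r * M) → Bool) (hx : memS r x) (hy : memS r y)
    (z : ℂ) (hz : ‖z‖ ≤ 1) :
    ‖Pgen p x (fun _ : Fin k => false) z - Pgen p y (fun _ : Fin k => false) z‖ ≤
      (k : ℝ) * ‖Pgen p x (evec k k) z - Pgen p y (evec k k) z‖ := by
  have hkL : k ≤ r * M := hkr.trans (Nat.le_mul_of_pos_right r hM)
  have hrange {w : Fin (r * M) → Bool} (hw : memS r w) (m : ℕ) (hm : bitAt w m) :
      k - 1 ≤ m ∧ m + k ≤ r * M := by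
    have := hw.add_le_of_bitAt (dvd_mul_right r M) hm
    omega
  rw [Pgen_zeros_eq p hk1 hkL (hx.onesSeparated hkr) (hrange hx),
    Pgen_zeros_eq p hk1 hkL (hy.onesSeparated hkr) (hrange hy), sub_sub_sub_cancel_left,
    ← mul_sub, norm_mul, norm_sub_rev]
  exact mul_le_mul_of_nonneg_right
    (norm_geom_sum_le (norm_ofReal_add_one_sub_mul_le_one hp0 hp1.le hz) k) (norm_nonneg _)

/-- For `x, y ∈ S` and `|z| ≤ 1`,
`|P_{0^k,x}(z) - P_{0^k,y}(z)| ≤ k · |P_{e_k,x}(z) - P_{e_k,y}(z)|`. -/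
theorem stmt_8 (p : ℝ) (hp0 : 0 ≤ p) (hp1 : p < 1) (r M k : ℕ)
    (hr : 1 ≤ r) (hM : 1 ≤ M) (hk1 : 1 ≤ k) (hkr : k ≤ r)
    (x y : Fin (r * M) → Bool) (hx : memS r x) (hy : memS r y)
    (z : ℂ) (hz : ‖z‖ ≤ 1) :
    ‖Pgen p x (fun _ : Fin k => false) z - Pgen p y (fun _ : Fin k => false) z‖ ≤
      (k : ℝ) * ‖Pgen p x (evec k k) z - Pgen p y (evec k k) z‖ :=
  stmt_8_general p hp0 hp1 r M k hM hk1 hkr x y hx hy z hz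
end

section
/- Let a ∈ [0,1/8] and ρ ≥ 1. For any θ ∈ ℝ, set u = ρ·e^{iθ} and z = (1−4a) + 4a·(u+u^{−1})/2 ∈ ℂ (a point on the boundary of the scaled Bernstein ellipse Ẽ_{a,ρ}). Then |z| ≤ 1 + 2a(ρ−1)²/ρ. -/
/-!
By the triangle inequality, `|z| ≤ (1 - 4a) + 2a·|u + u⁻¹| ≤ (1 - 4a) + 2a(ρ + ρ⁻¹)`, using
`1 - 4a ≥ 0`; and `(1 - 4a) + 2a(ρ + ρ⁻¹) = 1 + 2a(ρ - 1)²/ρ`.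
-/

lemma Complex.norm_add_inv_le (u : ℂ) : ‖u + u⁻¹‖ ≤ ‖u‖ + ‖u‖⁻¹ :=
  (norm_add_le _ _).trans_eq (by rw [norm_inv])

lemma Complex.norm_one_sub_add_joukowski_le {a : ℝ} (ha0 : 0 ≤ a) (ha1 : a ≤ 1 / 4)
    {u : ℂ} (hu : u ≠ 0) :
    ‖(1 - 4 * (a : ℂ)) + 4 * (a : ℂ) * (u + u⁻¹) / 2‖ ≤ 1 + 2 * a * (‖u‖ - 1) ^ 2 / ‖u‖ := by
  have hr : 0 < ‖u‖ := norm_pos_iff.mpr hu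
  have hcoe : (1 - 4 * (a : ℂ)) = ((1 - 4 * a : ℝ) : ℂ) := by push_cast; ring
  calc _ ≤ ‖(1 - 4 * (a : ℂ))‖ + ‖4 * (a : ℂ) * (u + u⁻¹) / 2‖ := norm_add_le _ _
    _ = (1 - 4 * a) + 2 * a * ‖u + u⁻¹‖ := by
      rw [hcoe, Complex.norm_real, Real.norm_of_nonneg (by linarith), norm_div, norm_mul,
        norm_mul, Complex.norm_real, Real.norm_of_nonneg ha0]
      norm_num
      ring
    _ ≤ (1 - 4 * a) + 2 * a * (‖u‖ + ‖u‖⁻¹) := by gcongr; exact Complex.norm_add_inv_le u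
    _ = 1 + 2 * a * (‖u‖ - 1) ^ 2 / ‖u‖ := by field_simp; ring

/-- For `a ∈ [0,1/8]`, `ρ ≥ 1`, `θ ∈ ℝ`, the point
`z = (1-4a) + 4a (u + u⁻¹)/2` with `u = ρ e^{iθ}` (on the boundary of the scaled Bernstein
ellipse `Ẽ_{a,ρ}`) satisfies `|z| ≤ 1 + 2a(ρ-1)²/ρ`. -/
theorem stmt_9 (a ρ θ : ℝ) (ha0 : 0 ≤ a) (ha1 : a ≤ 1/8) (hρ : 1 ≤ ρ) :
    ‖((1 - 4 * (a : ℂ)) + 4 * (a : ℂ) *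
        (((ρ : ℂ) * Complex.exp (θ * Complex.I)) +
          ((ρ : ℂ) * Complex.exp (θ * Complex.I))⁻¹) / 2)‖ ≤
      1 + 2 * a * (ρ - 1) ^ 2 / ρ := by
  have hρ0 : 0 < ρ := by linarith
  have hnorm : ‖(ρ : ℂ) * Complex.exp (θ * Complex.I)‖ = ρ := by
    rw [norm_mul, Complex.norm_exp_ofReal_mul_I, Complex.norm_real, Real.norm_of_nonneg hρ0.le,
      mul_one]
  have hu : (ρ : ℂ) * Complex.exp (θ * Complex.I) ≠ 0 := by
    rw [← norm_ne_zero_iff, hnorm]; exact hρ0.ne'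
  have := Complex.norm_one_sub_add_joukowski_le ha0 (by linarith) hu
  rwa [hnorm] at this
end

section
/- Let Ω be a finite set, m ≥ 1 an integer, ε ∈ [0,1], and let D_0, D_1, …, D_m be probability mass functions on Ω such that TV(D_0, D_i) ≥ 1−ε for every 1 ≤ i ≤ m. Then Σ_{x ∈ Ω : D_0(x) > D_i(x) for all 1 ≤ i ≤ m} D_0(x) ≥ 1 − mε. In particular, a sample x drawn from D_0 satisfies D_0(x) > D_i(x) for all i (so maximum likelihood estimation outputs index 0 regardless of tie-breaking) with probability at least 1−mε. -/
/-!
For a single competitor `D i`, the `D 0`-mass of the points where `D 0 > D i` is at least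
`∑ (D 0 - D i)⁺ = TV(D 0, D i) ≥ 1 - ε`, so the points where `D i` ties or wins carry `D 0`-mass
at most `ε`. A union bound over the `m` competitors bounds the `D 0`-mass of the complement of
the good set by `mε`.
-/

open Finset

section UnionBound

variable {ι α M : Type*} [AddCommMonoid M] [PartialOrder M] [IsOrderedAddMonoid M]

theorem Finset.sum_filter_not_forall_le (I : Finset ι) (s : Finset α) (P : ι → α → Prop)
    [∀ i x, Decidable (P i x)] {w : α → M} (hw : ∀ x ∈ s, 0 ≤ w x) :
    ∑ x ∈ s with ¬ ∀ i ∈ I, P i x, w x ≤ ∑ i ∈ I, ∑ x ∈ s with ¬ P i x, w x := by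
  simp only [sum_filter]
  rw [sum_comm]
  refine sum_le_sum fun x hx => ?_
  split_ifs with hall
  · exact sum_nonneg fun i _ => ite_nonneg (hw x hx) le_rfl
  · obtain ⟨i, hi, hPi⟩ := not_forall₂.mp hall
    calc w x = if ¬ P i x then w x else 0 := (if_pos hPi).symm
      _ ≤ ∑ j ∈ I, if ¬ P j x then w x else 0 :=
        single_le_sum (f := fun j => if ¬ P j x then w x else 0)
          (fun j _ => ite_nonneg (hw x hx) le_rfl) hi

end UnionBound

section TotalVariation

variable {Ω : Type*} [Fintype Ω]

noncomputable def tvDist (p q : Ω → ℝ) : ℝ := (1 / 2) * ∑ x, |p x - q x|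

theorem tvDist_eq_sum_posPart {p q : Ω → ℝ} (h : ∑ x, p x = ∑ x, q x) :
    tvDist p q = ∑ x, (p x - q x)⁺ := by
  have posPart_eq_half : ∀ a : ℝ, a⁺ = (|a| + a) / 2 := fun a => by
    linarith [posPart_add_negPart a, posPart_sub_negPart a]
  have sum_sub : ∑ x, (p x - q x) = 0 := by rw [sum_sub_distrib, h, sub_self]
  simp only [tvDist, posPart_eq_half, ← sum_div, sum_add_distrib, sum_sub]
  ring

theorem sum_posPart_sub_le_sum_filter_lt {p q : Ω → ℝ} (hq : ∀ x, 0 ≤ q x) :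
    ∑ x, (p x - q x)⁺ ≤ ∑ x with q x < p x, p x := by
  rw [sum_filter]
  refine sum_le_sum fun x _ => ?_
  split_ifs with hlt
  · rw [posPart_eq_self.mpr (sub_nonneg.mpr hlt.le)]
    linarith [hq x]
  · rw [posPart_eq_zero.mpr (sub_nonpos.mpr (not_lt.mp hlt))]

theorem sum_filter_not_lt_le_one_sub_tvDist {p q : Ω → ℝ} (hq : ∀ x, 0 ≤ q x)
    (hp1 : ∑ x, p x = 1) (hq1 : ∑ x, q x = 1) :
    ∑ x with ¬ q x < p x, p x ≤ 1 - tvDist p q := by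
  have hsplit := sum_filter_add_sum_filter_not univ (fun x => q x < p x) p
  have hwin := sum_posPart_sub_le_sum_filter_lt (p := p) hq
  rw [← tvDist_eq_sum_posPart (hp1.trans hq1.symm)] at hwin
  linarith

end TotalVariation

theorem stmt_13_general {Ω : Type*} [Fintype Ω] (m : ℕ) (ε : ℝ)
    (D : Fin (m + 1) → Ω → ℝ)
    (hpos : ∀ i x, 0 ≤ D i x) (hsum : ∀ i, ∑ x, D i x = 1)
    (hTV : ∀ i : Fin (m + 1), i ≠ 0 → 1 - ε ≤ (1/2) * ∑ x, |D 0 x - D i x|) :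
    1 - m * ε ≤
      ∑ x ∈ Finset.univ.filter (fun x : Ω => ∀ i : Fin (m + 1), i ≠ 0 → D i x < D 0 x),
        D 0 x := by
  classical
  have hbad : ∑ x with ¬ ∀ i : Fin (m + 1), i ≠ 0 → D i x < D 0 x, D 0 x ≤ m * ε :=
    calc ∑ x with ¬ ∀ i : Fin (m + 1), i ≠ 0 → D i x < D 0 x, D 0 x
        ≤ ∑ i ∈ univ.erase 0, ∑ x with ¬ D i x < D 0 x, D 0 x := by
          simpa only [mem_erase, mem_univ, and_true] using
            sum_filter_not_forall_le (univ.erase 0) univ (fun i x => D i x < D 0 x)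
              (fun x _ => hpos 0 x)
      _ ≤ ∑ _i ∈ univ.erase (0 : Fin (m + 1)), ε := by
          refine sum_le_sum fun i hi => ?_
          have hfar : 1 - ε ≤ tvDist (D 0) (D i) := hTV i (ne_of_mem_erase hi)
          linarith [sum_filter_not_lt_le_one_sub_tvDist (hpos i) (hsum 0) (hsum i)]
      _ = m * ε := by simp [card_erase_of_mem]
  have hsplit := sum_filter_add_sum_filter_not univ
    (fun x => ∀ i : Fin (m + 1), i ≠ 0 → D i x < D 0 x) (D 0)
  linarith [hsum 0]

/-- If `D_0, …, D_m` are pmfs on a finite set `Ω` with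
`TV(D_0, D_i) ≥ 1 - ε` for all `1 ≤ i ≤ m`, then the `D_0`-mass of the set of points where
`D_0` is strictly larger than every other `D_i` (so MLE outputs index `0` regardless of
tie-breaking) is at least `1 - mε`. -/
theorem stmt_13 {Ω : Type*} [Fintype Ω] (m : ℕ) (hm : 1 ≤ m) (ε : ℝ)
    (hε0 : 0 ≤ ε) (hε1 : ε ≤ 1) (D : Fin (m + 1) → Ω → ℝ)
    (hpos : ∀ i x, 0 ≤ D i x) (hsum : ∀ i, ∑ x, D i x = 1)
    (hTV : ∀ i : Fin (m + 1), i ≠ 0 → 1 - ε ≤ (1/2) * ∑ x, |D 0 x - D i x|) :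
    1 - m * ε ≤
      ∑ x ∈ Finset.univ.filter (fun x : Ω => ∀ i : Fin (m + 1), i ≠ 0 → D i x < D 0 x),
        D 0 x :=
  stmt_13_general m ε D hpos hsum hTV
end

section
/- Let m ≥ 2 be an integer, Ω = {1,…,m}, let D_0 be the uniform pmf on Ω (D_0(x) = 1/m for all x), and for 1 ≤ i ≤ m let D_i be the point mass at i (D_i(i) = 1, D_i(x) = 0 for x ≠ i). Then TV(D_0, D_i) = 1 − 1/m for every 1 ≤ i ≤ m, and yet there is no x ∈ Ω with D_0(x) > D_i(x) for all 1 ≤ i ≤ m; consequently the probability that maximum likelihood estimation on a sample from D_0 outputs index 0 is 0. (This shows the factor m loss in the MLE guarantee is in general inevitable.) -/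
open Finset

section PointMassVsUniform

variable {α : Type*} [Fintype α]

lemma inv_card_le_one_of_mem (i : α) : 1 / (Fintype.card α : ℝ) ≤ 1 := by
  have : (1 : ℝ) ≤ Fintype.card α := by exact_mod_cast Fintype.card_pos_iff.mpr ⟨i⟩
  exact div_le_one_of_le₀ this (by positivity)

variable [DecidableEq α]

lemma half_sum_abs_uniform_sub_pointMass (i : α) :
    (1 / 2) * ∑ x : α, |1 / (Fintype.card α : ℝ) - (if x = i then 1 else 0)|
      = 1 - 1 / Fintype.card α := by
  have hcard : 0 < Fintype.card α := Fintype.card_pos_iff.mpr ⟨i⟩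
  have hn : (Fintype.card α : ℝ) ≠ 0 := by positivity
  have h_off : ∑ x ∈ {i}ᶜ, |1 / (Fintype.card α : ℝ) - (if x = i then 1 else 0)|
      = (Fintype.card α - 1) * (1 / Fintype.card α) := by
    rw [sum_congr rfl fun x hx => by
      rw [if_neg (by simpa using hx), sub_zero, abs_of_nonneg (by positivity)]]
    simp [card_compl, Nat.cast_sub hcard]
  rw [Fintype.sum_eq_add_sum_compl i, h_off, if_pos rfl,
    abs_of_nonpos (sub_nonpos.mpr (inv_card_le_one_of_mem i))]
  field_simp
  ring

lemma not_exists_forall_pointMass_lt_uniform :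
    ¬ ∃ x : α, ∀ i : α, (if x = i then (1 : ℝ) else 0) < 1 / (Fintype.card α : ℝ) := by
  rintro ⟨x, hx⟩
  have := hx x
  rw [if_pos rfl] at this
  exact (inv_card_le_one_of_mem x).not_gt this

end PointMassVsUniform

theorem stmt_14_general (m : ℕ) :
    (∀ i : Fin m,
      (1/2) * ∑ x : Fin m, |(1 / (m : ℝ)) - (if x = i then 1 else 0)| = 1 - 1 / m) ∧
    ¬ ∃ x : Fin m, ∀ i : Fin m, (if x = i then (1 : ℝ) else 0) < 1 / (m : ℝ) := by
  refine ⟨fun i => ?_, ?_⟩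
  · simpa only [Fintype.card_fin] using half_sum_abs_uniform_sub_pointMass i
  · simpa only [Fintype.card_fin] using not_exists_forall_pointMass_lt_uniform (α := Fin m)

/-- On `Ω = {1,…,m}` (`m ≥ 2`), let `D_0` be uniform and `D_i` the point mass at
`i`. Then `TV(D_0, D_i) = 1 - 1/m` for every `i`, yet no sample point has `D_0(x) > D_i(x)` for
all `i`; hence MLE on a sample from `D_0` outputs index `0` with probability `0`. -/
theorem stmt_14 (m : ℕ) (hm : 2 ≤ m) :
    (∀ i : Fin m,
      (1/2) * ∑ x : Fin m, |(1 / (m : ℝ)) - (if x = i then 1 else 0)| = 1 - 1 / m) ∧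
    ¬ ∃ x : Fin m, ∀ i : Fin m, (if x = i then (1 : ℝ) else 0) < 1 / (m : ℝ) :=
  stmt_14_general m
end

section
/- Let Ω be a finite set, n ≥ 1 and T ≥ 1 integers, ε ∈ (0,1), and for each s ∈ {0,1}^n let D_s be a probability mass function on Ω. Suppose there is a function A : Ω^T → {0,1}^n such that for every s ∈ {0,1}^n, Σ_{(x_1,…,x_T) : A(x_1,…,x_T) = s} ∏_{i=1}^T D_s(x_i) ≥ 1 − ε/2^{n+1}. Then for every s ∈ {0,1}^n, the probability under T i.i.d. samples (x_1,…,x_T) from D_s that ∏_{i=1}^T D_s(x_i) > ∏_{i=1}^T D_t(x_i) holds for every t ∈ {0,1}^n with t ≠ s is at least 1−ε. In particular, maximum likelihood estimation over the family {D_s} with T samples recovers s with probability at least 1−ε regardless of tie-breaking. (This is the key step of Corollary 1.4.) -/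
/-!
Write `p s` for the likelihood of `s` on a sample `x`, and suppose the decoder `A` errs with
probability at most `δ` under every `p t`. For `t ≠ s`, the `p s`-mass of `{p s ≤ p t}` is at
most `2δ`: on `{A = t}` it is bounded by the error probability of `A` under `p s`, and on
`{A ≠ t}` the inequality `p s ≤ p t` transfers the mass to `p t`, under which `A` errs there.
A union bound over the `2ⁿ - 1` competitors `t` then bounds the probability that the maximum
likelihood is not strictly attained at `s` by `2ⁿ⁺¹ δ = ε`.
-/

open Finset

theorem Finset.sum_biUnion_le_sum_sum {ι α M : Type*} [DecidableEq α] [AddCommMonoid M]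
    [PartialOrder M] [IsOrderedAddMonoid M] (s : Finset ι) (t : ι → Finset α) {f : α → M}
    (hf : ∀ a, 0 ≤ f a) : ∑ a ∈ s.biUnion t, f a ≤ ∑ i ∈ s, ∑ a ∈ t i, f a := by
  classical
  induction s using Finset.induction_on with
  | empty => simp
  | insert i s hi ih =>
    rw [biUnion_insert, sum_insert hi]
    calc ∑ a ∈ t i ∪ s.biUnion t, f a
        ≤ ∑ a ∈ t i ∪ s.biUnion t, f a + ∑ a ∈ t i ∩ s.biUnion t, f a :=
          le_add_of_nonneg_right (sum_nonneg fun a _ => hf a)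
      _ = ∑ a ∈ t i, f a + ∑ a ∈ s.biUnion t, f a := sum_union_inter
      _ ≤ ∑ a ∈ t i, f a + ∑ j ∈ s, ∑ a ∈ t j, f a := add_le_add_right ih _

theorem Fintype.sum_pi_prod_eq_one {ι Ω : Type*} [Fintype ι] [DecidableEq ι] [Fintype Ω]
    (q : Ω → ℝ) (hq : ∑ x, q x = 1) : ∑ xs : ι → Ω, ∏ i, q (xs i) = 1 := by
  rw [← Fintype.prod_sum (fun _ => q), hq, prod_const_one]

namespace Decoding

variable {α ι : Type*} [Fintype α] [DecidableEq ι]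
  {p : ι → α → ℝ} {A : α → ι} {δ : ℝ}

theorem sum_decode_ne_le (hsum : ∀ t, ∑ x, p t x = 1)
    (hA : ∀ t, 1 - δ ≤ ∑ x with A x = t, p t x) (t : ι) :
    ∑ x with A x ≠ t, p t x ≤ δ := by
  have := sum_filter_add_sum_filter_not univ (fun x => A x = t) (p t)
  linarith [hsum t, hA t]

theorem sum_likelihood_le_le (hp : ∀ t x, 0 ≤ p t x) (hsum : ∀ t, ∑ x, p t x = 1)
    (hA : ∀ t, 1 - δ ≤ ∑ x with A x = t, p t x) {s t : ι} (hst : s ≠ t) :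
    ∑ x with p s x ≤ p t x, p s x ≤ 2 * δ := by
  set E := ({x | p s x ≤ p t x} : Finset α)
  have decoded_t : ∑ x ∈ E with A x = t, p s x ≤ δ := calc
    _ ≤ ∑ x with A x ≠ s, p s x := by
      refine sum_le_sum_of_subset_of_nonneg (fun x hx => ?_) fun x _ _ => hp s x
      simp only [mem_filter, mem_univ, true_and] at hx ⊢
      rw [hx.2]
      exact hst.symm
    _ ≤ δ := sum_decode_ne_le hsum hA s
  have decoded_ne_t : ∑ x ∈ E with A x ≠ t, p s x ≤ δ := calc
    _ ≤ ∑ x ∈ E with A x ≠ t, p t x :=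
      sum_le_sum fun x hx => (mem_filter.1 (mem_filter.1 hx).1).2
    _ ≤ ∑ x with A x ≠ t, p t x :=
      sum_le_sum_of_subset_of_nonneg (filter_subset_filter _ (subset_univ E))
        fun x _ _ => hp t x
    _ ≤ δ := sum_decode_ne_le hsum hA t
  rw [← sum_filter_add_sum_filter_not E (fun x => A x = t)]
  linarith

theorem sum_not_strict_max_likelihood_le [Fintype ι] (hp : ∀ t x, 0 ≤ p t x)
    (hsum : ∀ t, ∑ x, p t x = 1) (hA : ∀ t, 1 - δ ≤ ∑ x with A x = t, p t x) (s : ι) :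
    ∑ x with ¬ ∀ t, t ≠ s → p t x < p s x, p s x ≤ 2 * Fintype.card ι * δ := by
  classical
  have hδ : 0 ≤ δ := by
    have := sum_decode_ne_le hsum hA s
    linarith [sum_nonneg fun x (_ : x ∈ ({x | A x ≠ s} : Finset α)) => hp s x]
  calc ∑ x with ¬ ∀ t, t ≠ s → p t x < p s x, p s x
      ≤ ∑ x ∈ (univ.erase s).biUnion (fun t => {x | p s x ≤ p t x}), p s x := by
        refine sum_le_sum_of_subset_of_nonneg (fun x hx => ?_) fun x _ _ => hp s x
        simp only [mem_filter, mem_univ, true_and, not_forall, not_lt] at hx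
        obtain ⟨t, hts, hle⟩ := hx
        simp only [mem_biUnion, mem_erase, mem_univ, mem_filter, and_true, true_and]
        exact ⟨t, hts, hle⟩
    _ ≤ ∑ t ∈ univ.erase s, ∑ x with p s x ≤ p t x, p s x :=
        sum_biUnion_le_sum_sum _ _ (hp s)
    _ ≤ ∑ _t ∈ univ.erase s, 2 * δ :=
        sum_le_sum fun t ht => sum_likelihood_le_le hp hsum hA (ne_of_mem_erase ht).symm
    _ ≤ ∑ _t : ι, 2 * δ :=
        sum_le_sum_of_subset_of_nonneg (erase_subset s univ) fun _ _ _ => by positivity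
    _ = 2 * Fintype.card ι * δ := by
        rw [sum_const, card_univ, nsmul_eq_mul]
        ring

end Decoding

theorem stmt_16_general {Ω : Type*} [Fintype Ω] (n T : ℕ)
    (ε : ℝ)
    (D : (Fin n → Bool) → Ω → ℝ)
    (hpos : ∀ s x, 0 ≤ D s x) (hsum : ∀ s, ∑ x, D s x = 1)
    (A : (Fin T → Ω) → (Fin n → Bool))
    (hA : ∀ s : Fin n → Bool,
      1 - ε / 2 ^ (n + 1) ≤
        ∑ xs ∈ Finset.univ.filter (fun xs : Fin T → Ω => A xs = s), ∏ i, D s (xs i)) :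
    ∀ s : Fin n → Bool,
      1 - ε ≤
        ∑ xs ∈ Finset.univ.filter (fun xs : Fin T → Ω =>
            ∀ t : Fin n → Bool, t ≠ s → (∏ i, D t (xs i)) < ∏ i, D s (xs i)),
          ∏ i, D s (xs i) := by
  intro s
  set p : (Fin n → Bool) → (Fin T → Ω) → ℝ := fun t xs => ∏ i, D t (xs i)
  have hp : ∀ t xs, 0 ≤ p t xs := fun t xs => prod_nonneg fun i _ => hpos t (xs i)
  have hp_sum : ∀ t, ∑ xs, p t xs = 1 := fun t => Fintype.sum_pi_prod_eq_one _ (hsum t)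
  have hbad := Decoding.sum_not_strict_max_likelihood_le hp hp_sum hA s
  have hsplit := sum_filter_add_sum_filter_not univ
    (fun xs => ∀ t, t ≠ s → p t xs < p s xs) (p s)
  have hε : 2 * (Fintype.card (Fin n → Bool) : ℝ) * (ε / 2 ^ (n + 1)) = ε := by
    simp only [Fintype.card_pi, Fintype.card_bool, prod_const, card_univ, Fintype.card_fin,
      Nat.cast_pow, Nat.cast_ofNat]
    field_simp
    ring
  rw [hp_sum s] at hsplit
  linarith

/-- Suppose for each `s ∈ {0,1}^n` we have a pmf `D_s` on a finite set `Ω`, and a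
reconstruction function `A : Ω^T → {0,1}^n` succeeds on `T` i.i.d. samples from `D_s` with
probability at least `1 - ε/2^{n+1}`, for every `s`. Then for every `s`, with probability at
least `1 - ε` over `T` i.i.d. samples from `D_s`, the likelihood of `s` strictly exceeds that of
every `t ≠ s` (so MLE recovers `s` regardless of tie-breaking). -/
theorem stmt_16 {Ω : Type*} [Fintype Ω] (n T : ℕ) (hn : 1 ≤ n) (hT : 1 ≤ T)
    (ε : ℝ) (hε0 : 0 < ε) (hε1 : ε < 1)
    (D : (Fin n → Bool) → Ω → ℝ)
    (hpos : ∀ s x, 0 ≤ D s x) (hsum : ∀ s, ∑ x, D s x = 1)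
    (A : (Fin T → Ω) → (Fin n → Bool))
    (hA : ∀ s : Fin n → Bool,
      1 - ε / 2 ^ (n + 1) ≤
        ∑ xs ∈ Finset.univ.filter (fun xs : Fin T → Ω => A xs = s), ∏ i, D s (xs i)) :
    ∀ s : Fin n → Bool,
      1 - ε ≤
        ∑ xs ∈ Finset.univ.filter (fun xs : Fin T → Ω =>
            ∀ t : Fin n → Bool, t ≠ s → (∏ i, D t (xs i)) < ∏ i, D s (xs i)),
          ∏ i, D s (xs i) :=
  stmt_16_general n T ε D hpos hsum A hA
end

section
/- For every integer n ≥ 4, set t := ⌊n/4⌋ and m := C(n,t) (the binomial coefficient). There exist a finite set Ω with |Ω| = m + n and probability mass functions D_0, D_1, …, D_m on Ω such that: (1) there exists a function A : Ω → {0,1,…,m} with Σ_{x : A(x)=j} D_j(x) ≥ 2/3 for every 0 ≤ j ≤ m; and (2) with T := t, for every tuple (x_1,…,x_T) ∈ Ω^T in the support of the T-fold product of D_0 (i.e., with ∏_{i=1}^T D_0(x_i) > 0) there exists 1 ≤ j ≤ m with ∏_{i=1}^T D_j(x_i) > ∏_{i=1}^T D_0(x_i). Consequently, maximum likelihood estimation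 on T i.i.d. samples from D_0 outputs index 0 with probability 0, even though one sample suffices to identify the distribution with probability 2/3. -/
open Finset

/-!
Take `n` light points and one heavy point for each `t`-subset `S` of them. `D₀` is uniform on
the light points, while `D_S` puts mass `2/3` on the heavy point of `S` and spreads `1/3`
uniformly over `S`. One sample identifies the distribution: a heavy point names `S`, a light
point is read as `D₀`. But `t` samples from `D₀` are light points lying in a common `t`-subset
`S`, and `D_S` gives each of them mass `1/(3t) > 1/n`, so `D_S` is strictly more likely.
-/

section Reindex

variable {ι ι' Ω Ω' : Type*}

def OneSampleIdentifiable [Fintype Ω] [DecidableEq ι] (D : ι → Ω → ℝ) (p : ℝ) : Prop :=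
  ∃ A : Ω → ι, ∀ j, p ≤ ∑ x ∈ univ.filter (fun x => A x = j), D j x

def MLEMissesOn (D : ι → Ω → ℝ) (i₀ : ι) (T : ℕ) : Prop :=
  ∀ xs : Fin T → Ω, 0 < ∏ i, D i₀ (xs i) →
    ∃ j, j ≠ i₀ ∧ ∏ i, D i₀ (xs i) < ∏ i, D j (xs i)

theorem OneSampleIdentifiable.comp_equiv [Fintype Ω] [Fintype Ω'] [DecidableEq ι]
    [DecidableEq ι'] {D : ι → Ω → ℝ} {p : ℝ} (h : OneSampleIdentifiable D p) (e : ι' ≃ ι)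
    (f : Ω' ≃ Ω) :
    OneSampleIdentifiable (fun j x => D (e j) (f x)) p := by
  obtain ⟨A, hA⟩ := h
  refine ⟨fun x => e.symm (A (f x)), fun j => ?_⟩
  simpa only [sum_filter, Equiv.symm_apply_eq,
    f.sum_comp (fun y => if A y = e j then D (e j) y else 0)] using hA (e j)

theorem MLEMissesOn.comp_equiv {D : ι → Ω → ℝ} {i₀ : ι'} {T : ℕ} (e : ι' ≃ ι)
    (f : Ω' ≃ Ω) (h : MLEMissesOn D (e i₀) T) :
    MLEMissesOn (fun j x => D (e j) (f x)) i₀ T := by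
  intro xs hpos
  obtain ⟨j, hj, hlt⟩ := h (f ∘ xs) hpos
  exact ⟨e.symm j, by rintro rfl; simp at hj, by simpa using hlt⟩

end Reindex

section HardFamily

variable {α : Type*} [Fintype α] [DecidableEq α] {t : ℕ}

noncomputable def hardFamily (t : ℕ) :
    Option {S : Finset α // #S = t} → {S : Finset α // #S = t} ⊕ α → ℝ
  | none, .inl _ => 0
  | none, .inr _ => (Fintype.card α : ℝ)⁻¹
  | some S, .inl S' => if S = S' then 2 / 3 else 0
  | some S, .inr a => if a ∈ S.1 then (3 * t : ℝ)⁻¹ else 0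

theorem hardFamily_nonneg (j x) : 0 ≤ hardFamily (α := α) t j x := by
  rcases j with _ | S <;> rcases x with S' | a <;> simp only [hardFamily] <;> positivity

theorem sum_hardFamily [Nonempty α] (ht : t ≠ 0) (j) :
    ∑ x, hardFamily (α := α) t j x = 1 := by
  rcases j with _ | ⟨S, hS⟩
  · simp [hardFamily, Fintype.sum_sum_type]
  · simp only [hardFamily, Fintype.sum_sum_type, sum_ite_eq, mem_univ, ↓reduceIte, sum_ite_mem,
      univ_inter, sum_const, hS, nsmul_eq_mul]
    field_simp
    norm_num

theorem hardFamily_oneSampleIdentifiable [Nonempty α] (ht : t ≠ 0) :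
    OneSampleIdentifiable (hardFamily (α := α) t) (2 / 3) := by
  refine ⟨Sum.elim some fun _ => none, ?_⟩
  rintro (_ | S)
  · rw [sum_filter_of_ne, sum_hardFamily ht]
    · norm_num
    · rintro (S | a) - h
      · simp [hardFamily] at h
      · rfl
  · calc (2 : ℝ) / 3 = hardFamily t (some S) (.inl S) := by simp [hardFamily]
      _ ≤ _ := single_le_sum (fun x _ => hardFamily_nonneg _ x) (by simp)

theorem hardFamily_mleMissesOn {T : ℕ} (hT : 0 < T) (hTt : T ≤ t)
    (htα : 3 * t < Fintype.card α) : MLEMissesOn (hardFamily (α := α) t) none T := by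
  intro xs hpos
  have hlight : ∀ i, ∃ a, xs i = .inr a := by
    intro i
    have := (prod_ne_zero_iff.mp hpos.ne') i (mem_univ i)
    rcases h : xs i with S | a
    · simp [h, hardFamily] at this
    · exact ⟨a, rfl⟩
  choose a ha using hlight
  obtain ⟨S, haS, hS⟩ := exists_superset_card_eq (s := univ.image a)
    (card_image_le.trans (by simpa using hTt)) (by omega)
  have h3t : (0 : ℝ) < 3 * t := by have : 0 < t := hT.trans_le hTt; positivity
  refine ⟨some ⟨S, hS⟩, by simp, ?_⟩
  have hmem : ∀ i, a i ∈ S := fun i => haS (mem_image_of_mem a (mem_univ i))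
  simp only [ha, hardFamily, hmem, if_true]
  have hlt : (3 * t : ℝ) < Fintype.card α := by exact_mod_cast htα
  exact prod_lt_prod_of_nonempty (fun _ _ => inv_pos.mpr (h3t.trans hlt))
    (fun _ _ => inv_strictAnti₀ h3t hlt)
    (univ_nonempty_iff.mpr ⟨⟨0, hT⟩⟩)

end HardFamily

/-- For every `n ≥ 4`, with `t = ⌊n/4⌋`, `m = C(n,t)`, there are pmfs
`D_0, …, D_m` on a set `Ω` of size `m + n` such that (1) some distinguisher
`A : Ω → {0,…,m}` identifies the source distribution from one sample with probability `≥ 2/3`,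
yet (2) on every tuple in the support of `D_0^{⊗t}` some `D_j`, `j ≠ 0`, has strictly larger
likelihood; hence MLE with `T = t` samples from `D_0` outputs index `0` with probability `0`. -/
theorem stmt_17 (n : ℕ) (hn : 4 ≤ n) :
    ∃ D : Fin (Nat.choose n (n / 4) + 1) → Fin (Nat.choose n (n / 4) + n) → ℝ,
      (∀ j x, 0 ≤ D j x) ∧ (∀ j, ∑ x, D j x = 1) ∧
      (∃ A : Fin (Nat.choose n (n / 4) + n) → Fin (Nat.choose n (n / 4) + 1),
        ∀ j, (2 : ℝ)/3 ≤ ∑ x ∈ Finset.univ.filter (fun x => A x = j), D j x) ∧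
      (∀ xs : Fin (n / 4) → Fin (Nat.choose n (n / 4) + n),
        0 < ∏ i, D 0 (xs i) →
          ∃ j : Fin (Nat.choose n (n / 4) + 1), j ≠ 0 ∧
            (∏ i, D 0 (xs i)) < ∏ i, D j (xs i)) := by
  have ht : n / 4 ≠ 0 := by omega
  have : Nonempty (Fin n) := ⟨⟨0, by omega⟩⟩
  let g : Fin (n.choose (n / 4)) ≃ {S : Finset (Fin n) // #S = n / 4} :=
    Fintype.equivOfCardEq (by simp)
  let e := (finSuccEquiv _).trans (Equiv.optionCongr g)
  let f := finSumFinEquiv.symm.trans (Equiv.sumCongr g (Equiv.refl (Fin n)))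
  have hmiss : MLEMissesOn (hardFamily (n / 4)) (e 0) (n / 4) := by
    rw [show e 0 = none by simp [e]]
    exact hardFamily_mleMissesOn (by omega) le_rfl (by simp; omega)
  exact ⟨fun j x => hardFamily (n / 4) (e j) (f x), fun _ _ => hardFamily_nonneg _ _,
    fun j => (f.sum_comp _).trans (sum_hardFamily ht _),
    (hardFamily_oneSampleIdentifiable ht).comp_equiv e f, hmiss.comp_equiv e f⟩
end

section
/- Fix a deletion probability p ∈ [0,1). There exists a constant C > 0 depending only on p such that: for all integers n ≥ k ≥ 1 and all strings x, y ∈ {0,1}^n whose length-k prefixes differ (x_i ≠ y_i for some 0 ≤ i ≤ k−1), setting w := (x_0,…,x_{k−1}) ∈ {0,1}^k, there exists z ∈ ℂ with |z| ≤ 1 such that |P_{w,x}(z) − P_{w,y}(z)| ≥ C. -/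
open Finset

/-!
With `q = p + (1 - p) z`, the unit disk in `z` becomes the disk `‖q - p‖ ≤ 1 - p`, and
`P_{w,x} - P_{w,y}` becomes `g q = ∑ a_j q^j` with `|a_j| ≤ 1` and `a_0 = 1`, since `w` occurs in
`x` at position 0 but not in `y`. On the circle `‖q‖ = p` we have `‖g q‖ ≤ 1 / (1 - p)`. By the
maximum modulus principle, `∏_{i<N} g (ζ^i q)` (`ζ` a primitive `N`-th root of unity) has modulus
at least `1` at some `q₀` on that circle. Some rotation `ζ^j q₀` lies within angle `π / N` of `p`,
hence in the disk once `N (1 - p) ≥ π p`, and bounding the other `N - 1` factors by `1 / (1 - p)`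
gives `‖g (ζ^j q₀)‖ ≥ (1 - p)^(N - 1)`.
-/

open Complex
open scoped Real

theorem norm_sum_mul_pow_le_inv_one_sub {a : ℕ → ℂ} (ha : ∀ j, ‖a j‖ ≤ 1) (m : ℕ) {q : ℂ}
    (hq : ‖q‖ < 1) : ‖∑ j ∈ range m, a j * q ^ j‖ ≤ (1 - ‖q‖)⁻¹ :=
  calc ‖∑ j ∈ range m, a j * q ^ j‖ ≤ ∑ j ∈ range m, ‖q‖ ^ j := by
        refine (norm_sum_le _ _).trans (sum_le_sum fun j _ => ?_)
        rw [norm_mul, norm_pow]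
        exact mul_le_of_le_one_left (by positivity) (ha j)
    _ ≤ ‖q‖ ^ 0 / (1 - ‖q‖) := by
        simpa using geom_sum_Ico_le_of_lt_one (norm_nonneg q) hq (m := 0) (n := m)
    _ = (1 - ‖q‖)⁻¹ := by rw [pow_zero, one_div]

theorem Complex.exists_norm_eq_and_norm_apply_zero_le {E : Type*} [NormedAddCommGroup E]
    [NormedSpace ℂ E] {f : ℂ → E} (hf : Differentiable ℂ f) {r : ℝ} (hr : 0 ≤ r) :
    ∃ z : ℂ, ‖z‖ = r ∧ ‖f 0‖ ≤ ‖f z‖ := by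
  rcases hr.eq_or_lt with rfl | hr
  · exact ⟨0, norm_zero, le_rfl⟩
  obtain ⟨z, hz, hmax⟩ := exists_mem_frontier_isMaxOn_norm (f := f) Metric.isBounded_ball
    ⟨0, Metric.mem_ball_self hr⟩ hf.diffContOnCl
  rw [frontier_ball 0 hr.ne'] at hz
  rw [closure_ball 0 hr.ne'] at hmax
  exact ⟨z, mem_sphere_zero_iff_norm.mp hz, hmax (Metric.mem_closedBall_self hr.le)⟩

theorem exists_lt_norm_exp_mul_I_sub_one_le {N : ℕ} (hN : 0 < N) (α : ℝ) :
    ∃ j < N, ‖exp (↑(2 * π * j / N + α) * I) - 1‖ ≤ π / N := by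
  have hNZ : (0 : ℤ) < N := by exact_mod_cast hN
  have hNR : (0 : ℝ) < N := by exact_mod_cast hN
  set u : ℝ := -(α * N / (2 * π))
  set r : ℤ := round u
  have hj : (((r % N).toNat : ℕ) : ℝ) = r - N * (r / N : ℤ) := by
    have := (Int.toNat_of_nonneg (Int.emod_nonneg r hNZ.ne')).trans (Int.emod_def r N)
    exact_mod_cast this
  refine ⟨(r % N).toNat, by have := Int.emod_lt_of_pos r hNZ; omega, ?_⟩
  set x : ℝ := 2 * π * r / N + α
  have hx : |x| ≤ π / N := by
    have hxu : x = 2 * π / N * (r - u) := by simp only [x, u]; field_simp; ring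
    rw [hxu, abs_mul, abs_of_pos (by positivity), abs_sub_comm]
    calc 2 * π / N * |u - r| ≤ 2 * π / N * (1 / 2) := by gcongr; exact abs_sub_round u
      _ = π / N := by ring
  have hperiodic : exp (↑(2 * π * ((r % N).toNat : ℝ) / N + α) * I) = exp (x * I) := by
    have : 2 * π * ((r % N).toNat : ℝ) / N + α = x + ((-(r / N) : ℤ) : ℝ) * (2 * π) := by
      rw [hj]; simp only [x]; field_simp; push_cast; ring
    rw [this]
    exact_mod_cast (exp_mul_I_periodic.int_mul _) (x : ℂ)
  rw [hperiodic, mul_comm]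
  exact Real.norm_exp_I_mul_ofReal_sub_one_le.trans (by rwa [Real.norm_eq_abs])

theorem one_le_mul_pow_of_one_le_prod {ι : Type*} [DecidableEq ι] {s : Finset ι} {f : ι → ℝ}
    {j : ι} {B : ℝ} (hj : j ∈ s) (hf0 : ∀ i ∈ s, 0 ≤ f i) (hfB : ∀ i ∈ s, f i ≤ B)
    (h : 1 ≤ ∏ i ∈ s, f i) :
    1 ≤ f j * B ^ (#s - 1) :=
  calc 1 ≤ ∏ i ∈ s, f i := h
    _ = f j * ∏ i ∈ s.erase j, f i := (mul_prod_erase s f hj).symm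
    _ ≤ f j * ∏ _i ∈ s.erase j, B :=
        mul_le_mul_of_nonneg_left (prod_le_prod (fun i hi => hf0 i (mem_of_mem_erase hi))
          fun i hi => hfB i (mem_of_mem_erase hi)) (hf0 j hj)
    _ = f j * B ^ (#s - 1) := by rw [prod_const, card_erase_of_mem hj]

theorem exists_norm_sub_le_and_one_le_norm_mul_pow {g : ℂ → ℂ} (hg : Differentiable ℂ g)
    (hg0 : 1 ≤ ‖g 0‖) {r B : ℝ} (hr : 0 ≤ r) (hB : ∀ q : ℂ, ‖q‖ = r → ‖g q‖ ≤ B) {N : ℕ}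
    (hN : 0 < N) : ∃ q : ℂ, ‖q - r‖ ≤ r * π / N ∧ 1 ≤ ‖g q‖ * B ^ (N - 1) := by
  set ζ : ℕ → ℂ := fun i => exp (↑(2 * π * i / N) * I)
  have hζ : ∀ i, ‖ζ i‖ = 1 := fun i => norm_exp_ofReal_mul_I _
  obtain ⟨q₀, hq₀, hmax⟩ := exists_norm_eq_and_norm_apply_zero_le
    (f := fun q => ∏ i ∈ range N, g (ζ i * q))
    (Differentiable.fun_finsetProd fun i _ => hg.comp (differentiable_id.const_mul _)) hr
  have hprod : 1 ≤ ∏ i ∈ range N, ‖g (ζ i * q₀)‖ := by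
    rw [← norm_prod]
    refine le_trans ?_ hmax
    simpa [norm_prod] using one_le_pow₀ hg0
  obtain ⟨j, hjN, hj⟩ := exists_lt_norm_exp_mul_I_sub_one_le hN (arg q₀)
  have hrot : ζ j * q₀ - r = r * (exp (↑(2 * π * j / N + arg q₀) * I) - 1) := by
    conv_lhs => rw [← norm_mul_exp_arg_mul_I q₀, hq₀]
    simp only [ζ]
    push_cast
    rw [add_mul, exp_add]
    ring
  refine ⟨ζ j * q₀, ?_, ?_⟩
  · rw [hrot, norm_mul, norm_real, Real.norm_of_nonneg hr]
    exact (mul_le_mul_of_nonneg_left hj hr).trans_eq (mul_div_assoc _ _ _).symm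
  · simpa using one_le_mul_pow_of_one_le_prod (mem_range.2 hjN)
      (fun i _ => norm_nonneg (g (ζ i * q₀)))
      (fun i _ => hB _ (by rw [norm_mul, hζ, one_mul, hq₀])) hprod

theorem exists_norm_sub_le_and_pow_le_norm_sum {p : ℝ} (hp0 : 0 ≤ p) (hp1 : p < 1) {N : ℕ}
    (hN : 0 < N) (hNp : π * p ≤ N * (1 - p)) {a : ℕ → ℂ} (ha : ∀ j, ‖a j‖ ≤ 1) (ha0 : a 0 = 1)
    {m : ℕ} (hm : 0 < m) :
    ∃ q : ℂ, ‖q - p‖ ≤ 1 - p ∧ (1 - p) ^ (N - 1) ≤ ‖∑ j ∈ range m, a j * q ^ j‖ := by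
  have h1p : 0 < 1 - p := sub_pos.2 hp1
  have hg0 : ∑ j ∈ range m, a j * 0 ^ j = 1 := by
    rw [sum_eq_single_of_mem 0 (mem_range.2 hm) fun j _ hj => by simp [hj], pow_zero, mul_one,
      ha0]
  obtain ⟨q, hqp, hq⟩ := exists_norm_sub_le_and_one_le_norm_mul_pow (r := p) (N := N)
    (g := fun q => ∑ j ∈ range m, a j * q ^ j)
    (Differentiable.fun_sum fun j _ => (differentiable_pow j).const_mul _)
    (by rw [hg0, norm_one]) hp0
    (fun q hq => hq ▸ norm_sum_mul_pow_le_inv_one_sub ha m (hq ▸ hp1)) hN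
  refine ⟨q, hqp.trans ((div_le_iff₀ (by exact_mod_cast hN)).2 (by linarith)), ?_⟩
  rwa [inv_pow, ← div_eq_mul_inv, one_le_div (by positivity)] at hq

section Kmers

variable {n k : ℕ}

theorem occAt_zero_prefix (x : Fin n → Bool) (hkn : k ≤ n) :
    occAt x (fun t : Fin k => x ⟨t.1, t.2.trans_le hkn⟩) 0 := by
  intro t _
  simp only [zero_add]

theorem not_occAt_zero_of_ne {y : Fin n → Bool} {w : Fin k → Bool} {i : ℕ} (hik : i < k)
    (hin : i < n) (h : y ⟨i, hin⟩ ≠ w ⟨i, hik⟩) : ¬ occAt y w 0 := fun hocc =>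
  h (by simpa using hocc ⟨i, hik⟩ (by simpa using hin))

theorem abs_indAt_sub_indAt_le_one (x y : Fin n → Bool) (w : Fin k → Bool) (j : ℕ) :
    |indAt x w j - indAt y w j| ≤ 1 := by
  unfold indAt
  split_ifs <;> norm_num

theorem Pgen_sub_Pgen (p : ℝ) (x y : Fin n → Bool) (w : Fin k → Bool) (z : ℂ) :
    Pgen p x w z - Pgen p y w z = ∑ j ∈ range (n - k + 1),
      ((indAt x w j - indAt y w j : ℝ) : ℂ) * ((p : ℂ) + (1 - (p : ℂ)) * z) ^ j := by
  rw [Pgen, Pgen, ← sum_sub_distrib]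
  push_cast
  simp only [sub_mul]

end Kmers

/-- Fix `p ∈ [0,1)`. There is a constant `C > 0` depending only on `p` such that
for all `1 ≤ k ≤ n` and all `x, y ∈ {0,1}^n` whose length-`k` prefixes differ, taking
`w = x[0:k-1]`, there is a point `z` in the closed unit disk with
`|P_{w,x}(z) - P_{w,y}(z)| ≥ C`. -/
theorem stmt_19 (p : ℝ) (hp0 : 0 ≤ p) (hp1 : p < 1) :
    ∃ C : ℝ, 0 < C ∧ ∀ n k : ℕ, 1 ≤ k → ∀ hkn : k ≤ n,
      ∀ x y : Fin n → Bool,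
        (∃ i : ℕ, ∃ h : i < k, x ⟨i, h.trans_le hkn⟩ ≠ y ⟨i, h.trans_le hkn⟩) →
        ∃ z : ℂ, ‖z‖ ≤ 1 ∧
          C ≤ ‖
              (Pgen p x (fun t : Fin k => x ⟨t.1, t.2.trans_le hkn⟩) z -
               Pgen p y (fun t : Fin k => x ⟨t.1, t.2.trans_le hkn⟩) z)‖ := by
  have h1p : 0 < 1 - p := sub_pos.2 hp1
  have h1p' : (1 : ℂ) - p ≠ 0 := by exact_mod_cast h1p.ne'
  obtain ⟨N, hN⟩ := exists_nat_gt (π * p / (1 - p))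
  have hN0 : 0 < N := by exact_mod_cast (div_nonneg (by positivity) h1p.le).trans_lt hN
  refine ⟨(1 - p) ^ (N - 1), pow_pos h1p _, ?_⟩
  rintro n k - hkn x y ⟨i, hik, hxy⟩
  set w : Fin k → Bool := fun t => x ⟨t.1, t.2.trans_le hkn⟩
  have ha0 : indAt x w 0 - indAt y w 0 = 1 := by
    rw [indAt, indAt, if_pos (occAt_zero_prefix x hkn),
      if_neg (not_occAt_zero_of_ne (w := w) hik (hik.trans_le hkn) (Ne.symm hxy)), sub_zero]
  obtain ⟨q, hqp, hq⟩ := exists_norm_sub_le_and_pow_le_norm_sum hp0 hp1 hN0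
    ((div_lt_iff₀ h1p).1 hN).le (a := fun j => ((indAt x w j - indAt y w j : ℝ) : ℂ))
    (fun j => (norm_real _).trans_le (abs_indAt_sub_indAt_le_one x y w j)) (by simp [ha0])
    (Nat.succ_pos (n - k))
  refine ⟨(q - p) / (1 - p), ?_, ?_⟩
  · rwa [norm_div, show ‖(1 : ℂ) - p‖ = 1 - p by exact_mod_cast Real.norm_of_nonneg h1p.le,
      div_le_one h1p]
  · rwa [Pgen_sub_Pgen, mul_div_cancel₀ _ h1p', add_sub_cancel]
end
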